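/- arXiv:1810.00185 — 4 statements merged into one kernel-verified Lean document; each statement's English description precedes it below -/
import Mathlib

section
/- The graph Γ(d) is connected: any two d-dimensional polytopes contained in ℝ^d can be transformed into one another by a finite sequence of insertion moves and deletion moves, all intermediate polytopes being d-dimensional polytopes in ℝ^d. -/
open Set

/-- Points of `ℝ^d`. -/
abbrev Pt (d : ℕ) := Fin d → ℝ

/-- A polytope in `ℝ^d` is the convex hull of a finite set of points. -/
def IsPolytope (d : ℕ) (P : Set (Pt d)) : Prop :=
  ∃ S : Finset (Pt d), P = convexHull ℝ (S : Set (Pt d))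

/-- A set is `d`-dimensional (full-dimensional) if its affine hull is all of `ℝ^d`. -/
def FullDim (d : ℕ) (P : Set (Pt d)) : Prop := affineSpan ℝ P = ⊤

/-- A point `x` can be inserted in `P` when the convex hull of `P ∪ {x}` has as its
vertex set (set of extreme points) exactly the vertex set of `P` together with `x`. -/
def CanInsert (d : ℕ) (P : Set (Pt d)) (x : Pt d) : Prop :=
  Set.extremePoints ℝ (convexHull ℝ (P ∪ {x})) = Set.extremePoints ℝ P ∪ {x}

/-- A vertex `v` of `P` can be deleted from `P` when the convex hull of the remaining
vertices is `d`-dimensional. -/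
def CanDelete (d : ℕ) (P : Set (Pt d)) (v : Pt d) : Prop :=
  v ∈ Set.extremePoints ℝ P ∧
    FullDim d (convexHull ℝ (Set.extremePoints ℝ P \ {v}))

/-- `Q` is obtained from `P` by an insertion move. -/
def InsertMove (d : ℕ) (P Q : Set (Pt d)) : Prop :=
  ∃ x : Pt d, CanInsert d P x ∧ Q = convexHull ℝ (P ∪ {x})

/-- `Q` is obtained from `P` by a deletion move. -/
def DeleteMove (d : ℕ) (P Q : Set (Pt d)) : Prop :=
  ∃ v : Pt d, CanDelete d P v ∧ Q = convexHull ℝ (Set.extremePoints ℝ P \ {v})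

/-- Adjacency: one polytope is obtained from the other by inserting a point or
deleting a vertex. -/
def Move (d : ℕ) (P Q : Set (Pt d)) : Prop :=
  InsertMove d P Q ∨ DeleteMove d P Q ∨ InsertMove d Q P ∨ DeleteMove d Q P

/-- There is a path of at most `n` edges from `P` to `Q` all of whose vertices lie in
the class `C` of polytopes (i.e. `P` and `Q` are at distance at most `n` in the subgraph
induced by `C`). -/
def PathLE (d : ℕ) (C : Set (Set (Pt d))) (P Q : Set (Pt d)) (n : ℕ) : Prop :=
  ∃ (m : ℕ) (f : ℕ → Set (Pt d)), m ≤ n ∧ f 0 = P ∧ f m = Q ∧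
    (∀ i ≤ m, f i ∈ C) ∧ ∀ i < m, Move d (f i) (f (i + 1))

/-- The subgraph induced by the class `C` is connected. -/
def ConnectedIn (d : ℕ) (C : Set (Set (Pt d))) : Prop :=
  ∀ P ∈ C, ∀ Q ∈ C, ∃ n, PathLE d C P Q n

/-- The vertex set of the graph `Γ(d)`: the `d`-dimensional polytopes in `ℝ^d`. -/
def Gamma (d : ℕ) : Set (Set (Pt d)) := {P | IsPolytope d P ∧ FullDim d P}

/-- The number of vertices of a polytope. -/
noncomputable def nVerts (d : ℕ) (P : Set (Pt d)) : ℕ := (Set.extremePoints ℝ P).ncard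

/-- A lattice point of `ℝ^d`. -/
def IsLatticePt (d : ℕ) (x : Pt d) : Prop := ∀ i, ∃ z : ℤ, x i = (z : ℝ)

/-- A lattice polytope: all its vertices are lattice points. -/
def IsLatticePoly (d : ℕ) (P : Set (Pt d)) : Prop :=
  ∀ v ∈ Set.extremePoints ℝ P, IsLatticePt d v

/-- The hypercube `[0,k]^d`. -/
def Cube (d k : ℕ) : Set (Pt d) := {x | ∀ i, x i ∈ Set.Icc (0 : ℝ) (k : ℝ)}

/-- The vertex set of `Λ(d)`: the `d`-dimensional lattice polytopes in `ℝ^d`. -/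
def Lambda (d : ℕ) : Set (Set (Pt d)) :=
  {P | IsPolytope d P ∧ FullDim d P ∧ IsLatticePoly d P}

/-- The vertex set of `Λ(d,k)`: the `d`-dimensional lattice polytopes in `[0,k]^d`. -/
def LambdaK (d k : ℕ) : Set (Set (Pt d)) := {P ∈ Lambda d | P ⊆ Cube d k}

/-- A facet of a polytope `P`: an exposed face of dimension `d-1`. -/
def IsFacet (d : ℕ) (P F : Set (Pt d)) : Prop :=
  IsExposed ℝ P F ∧ F.Nonempty ∧ F ≠ P ∧
    Module.finrank ℝ ↥(vectorSpan ℝ F) = d - 1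

/-- `H` is the closed half-space `H_F^-(P)` bounded by the affine hull of the facet `F`
and satisfying `P ∩ H = F`. -/
def BoundingHalfspace (d : ℕ) (P F H : Set (Pt d)) : Prop :=
  ∃ (l : (Pt d) →ₗ[ℝ] ℝ) (c : ℝ), l ≠ 0 ∧
    H = {x | l x ≤ c} ∧
    (affineSpan ℝ F : Set (Pt d)) = {x | l x = c} ∧
    P ∩ H = F

/-- The cone `C_v(P)`: the intersection of the half-spaces `H_F^-(P)` over all facets
`F` of `P` incident to `v`. -/
def Cone (d : ℕ) (P : Set (Pt d)) (v : Pt d) : Set (Pt d) :=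
  {x | ∀ F H : Set (Pt d), IsFacet d P F → v ∈ F → BoundingHalfspace d P F H → x ∈ H}

/-- A set `A` is in convex position: every finite subset of `A` is the vertex set of
a polytope, namely of its own convex hull. -/
def ConvexPosition (d : ℕ) (A : Set (Pt d)) : Prop :=
  ∀ S : Finset (Pt d), (S : Set (Pt d)) ⊆ A →
    Set.extremePoints ℝ (convexHull ℝ (S : Set (Pt d))) = (S : Set (Pt d))

/-!
Inside a finite set `X` in convex position, the hull of any spanning `A ⊆ X` grows to `conv X`
by inserting the points of `X \ A` one at a time. Hence every `d`-polytope is joined to the simplex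
spanned by any affine basis among its vertices, and two simplices `S, T` are joined through
`conv (S ∪ (T + R • u))` whenever `S ∪ (T + R • u)` is in convex position. That happens for large
`R` as soon as each vertex of `S` is exposed by a functional decreasing along `u` and each vertex
of `T` by one increasing along `u`; in barycentric coordinates, for every vertex `i` some other
coordinate must increase (resp. decrease) along `u`. A simplex of dimension `d ≥ 2` has at least
three vertices, so for a generic `u` either `u` or `-u` works for it, and the reflection `-T`
repairs a sign mismatch between `S` and `T`.
-/

open Filter Pointwise

section ExtremePoints

variable {𝕜 E : Type*} [Field 𝕜] [LinearOrder 𝕜] [IsStrictOrderedRing 𝕜] [AddCommGroup E]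
  [Module 𝕜 E]

theorem mem_extremePoints_convexHull_insert {x : E} {s : Set E} (hx : x ∉ convexHull 𝕜 s) :
    x ∈ (convexHull 𝕜 (insert x s)).extremePoints 𝕜 := by
  rcases s.eq_empty_or_nonempty with rfl | hs
  · simp
  rw [convexHull_insert hs, convexJoin_singleton_left, mem_extremePoints_iff_forall_segment]
  obtain ⟨k, hk⟩ := (convexHull_nonempty_iff (𝕜 := 𝕜)).2 hs
  refine ⟨mem_iUnion₂.2 ⟨k, hk, left_mem_segment 𝕜 x k⟩, ?_⟩
  intro y hy z hz ⟨p, q, hp, hq, hpq, hpqx⟩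
  obtain ⟨k₁, hk₁, a₁, b₁, -, hb₁, hab₁, rfl⟩ := mem_iUnion₂.1 hy
  obtain ⟨k₂, hk₂, a₂, b₂, -, hb₂, hab₂, rfl⟩ := mem_iUnion₂.1 hz
  obtain rfl := eq_sub_of_add_eq hab₁
  obtain rfl := eq_sub_of_add_eq hab₂
  by_contra! hne
  have hb₁ : 0 < b₁ := hb₁.lt_of_ne' fun h => hne.1 (by simp [h])
  have hb₂ : 0 < b₂ := hb₂.lt_of_ne' fun h => hne.2 (by simp [h])
  -- Solving `hpqx` for `x` exhibits `x` as a convex combination of `k₁` and `k₂`.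
  have hc : 0 < p * b₁ + q * b₂ := by rcases hp.eq_or_lt with rfl | hp <;> nlinarith
  have hcx : (p * b₁ + q * b₂) • x = (p * b₁) • k₁ + (q * b₂) • k₂ := by
    linear_combination (norm := module) -hpqx + hpq • x
  have hcomb : x = (p * b₁ / (p * b₁ + q * b₂)) • k₁ + (q * b₂ / (p * b₁ + q * b₂)) • k₂ := by
    rw [div_eq_inv_mul, div_eq_inv_mul, mul_smul _ (p * b₁), mul_smul _ (q * b₂), ← smul_add, ← hcx,
      inv_smul_smul₀ hc.ne']
  exact hx (hcomb ▸ convex_convexHull 𝕜 s hk₁ hk₂ (by positivity) (by positivity)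
    (by field_simp))

theorem ConvexIndependent.extremePoints_convexHull {s : Set E}
    (hs : ConvexIndependent 𝕜 ((↑) : s → E)) : (convexHull 𝕜 s).extremePoints 𝕜 = s := by
  refine extremePoints_convexHull_subset.antisymm fun x hx => ?_
  have := mem_extremePoints_convexHull_insert
    (convexIndependent_set_iff_notMem_convexHull_sdiff.1 hs x hx)
  rwa [insert_sdiff_singleton, insert_eq_of_mem hx] at this

end ExtremePoints

section ExposedAwayFrom

variable {E : Type*} [AddCommGroup E] [Module ℝ E]

theorem notMem_convexHull_of_forall_lt {s : Set E} {x : E} (l : E →ₗ[ℝ] ℝ)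
    (h : ∀ y ∈ s, l y < l x) : x ∉ convexHull ℝ s := fun hx =>
  lt_irrefl (l x) (convexHull_min h (convex_halfSpace_lt l.isLinear (l x)) hx)

theorem exists_forall_apply_ne_zero {ι : Type*} [Finite ι] {f : ι → E →ₗ[ℝ] ℝ}
    (hf : ∀ i, f i ≠ 0) : ∃ u, ∀ i, f i u ≠ 0 := by
  by_contra! h
  obtain ⟨i, hi⟩ := Subspace.exists_eq_top_of_iUnion_eq_univ (p := fun i => LinearMap.ker (f i))
    (eq_univ_of_forall fun u => mem_iUnion.2 (h u))
  exact hf i (LinearMap.ker_eq_top.1 hi)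

/-- Points of such an `A` stay vertices when points far out in direction `u` are added. -/
def ExposedAwayFrom (A : Set E) (u : E) : Prop :=
  ∀ a ∈ A, ∃ l : E →ₗ[ℝ] ℝ, l u < 0 ∧ ∀ a' ∈ A, a' ≠ a → l a' < l a

variable {A B : Set E} {u : E}

theorem ExposedAwayFrom.neg (h : ExposedAwayFrom A u) : ExposedAwayFrom (-A) (-u) := by
  intro a ha
  obtain ⟨l, hlu, hl⟩ := h (-a) ha
  refine ⟨-l, by simpa using hlu, fun a' ha' hne => ?_⟩
  simpa using hl (-a') ha' (neg_injective.ne hne)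

theorem ExposedAwayFrom.vadd (h : ExposedAwayFrom A u) (v : E) : ExposedAwayFrom (v +ᵥ A) u := by
  rintro _ ⟨a, ha, rfl⟩
  obtain ⟨l, hlu, hl⟩ := h a ha
  refine ⟨l, hlu, ?_⟩
  rintro _ ⟨a', ha', rfl⟩ hne
  simpa using hl a' ha' (by rintro rfl; exact hne rfl)

theorem ExposedAwayFrom.eventually_convexIndependent_union (hA : A.Finite) (hB : B.Finite)
    (hAu : ExposedAwayFrom A u) (hBu : ExposedAwayFrom B (-u)) :
    ∀ᶠ R : ℝ in atTop, ConvexIndependent ℝ ((↑) : ↥(A ∪ (R • u +ᵥ B)) → E) := by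
  have hAR : ∀ a ∈ A, ∀ᶠ R : ℝ in atTop, a ∉ convexHull ℝ ((A ∪ (R • u +ᵥ B)) \ {a}) := by
    intro a ha
    obtain ⟨l, hlu, hl⟩ := hAu a ha
    have hfar : ∀ b ∈ B, ∀ᶠ R : ℝ in atTop, l (R • u + b) < l a := fun b _ => by
      simp only [map_add, map_smul, smul_eq_mul]
      exact (tendsto_atBot_add_const_right _ _ (tendsto_id.atTop_mul_const_of_neg hlu)).eventually
        (eventually_lt_atBot _)
    filter_upwards [(hB.eventually_all).2 hfar] with R hR
    refine notMem_convexHull_of_forall_lt l ?_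
    rintro y ⟨hy | ⟨b, hb, rfl⟩, hya⟩
    exacts [hl y hy hya, hR b hb]
  have hBR : ∀ b ∈ B, ∀ᶠ R : ℝ in atTop,
      R • u + b ∉ convexHull ℝ ((A ∪ (R • u +ᵥ B)) \ {R • u + b}) := by
    intro b hb
    obtain ⟨l, hlu, hl⟩ := hBu b hb
    rw [map_neg, neg_lt_zero] at hlu
    have hfar : ∀ a ∈ A, ∀ᶠ R : ℝ in atTop, l a < l (R • u + b) := fun a _ => by
      simp only [map_add, map_smul, smul_eq_mul]
      exact (tendsto_atTop_add_const_right _ _ (tendsto_id.atTop_mul_const hlu)).eventually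
        (eventually_gt_atTop _)
    filter_upwards [(hA.eventually_all).2 hfar] with R hR
    refine notMem_convexHull_of_forall_lt l ?_
    rintro y ⟨hy | ⟨b', hb', rfl⟩, hyb⟩
    · exact hR y hy
    · have := hl b' hb' (by rintro rfl; exact hyb rfl)
      simp only [vadd_eq_add, map_add]
      linarith
  filter_upwards [(hA.eventually_all).2 hAR, (hB.eventually_all).2 hBR] with R hA hB
  refine convexIndependent_set_iff_notMem_convexHull_sdiff.2 ?_
  rintro x (hx | ⟨b, hb, rfl⟩)
  exacts [hA x hx, hB b hb]

end ExposedAwayFrom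

section AffineSpan

variable {k V : Type*} [Ring k] [AddCommGroup V] [Module k V] {s : Set V}

theorem affineSpan_vadd_eq_top (v : V) (h : affineSpan k s = ⊤) : affineSpan k (v +ᵥ s) = ⊤ := by
  rw [← AffineSubspace.pointwise_vadd_span, h, AffineSubspace.pointwise_vadd_top]

theorem affineSpan_neg_eq_top (h : affineSpan k s = ⊤) : affineSpan k (-s) = ⊤ := by
  rw [← image_neg_eq_neg]
  exact (AffineEquiv.span_eq_top_iff (LinearEquiv.neg k).toAffineEquiv).1 h

end AffineSpan

theorem exists_ne_pos_or_exists_ne_neg {ι : Type*} [Fintype ι] (hι : 3 ≤ Fintype.card ι)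
    {a : ι → ℝ} (ha : ∀ i, a i ≠ 0) : (∀ i, ∃ j ≠ i, 0 < a j) ∨ ∀ i, ∃ j ≠ i, a j < 0 := by
  classical
  refine or_iff_not_imp_left.2 fun h i => ?_
  push Not at h
  obtain ⟨i₀, hi₀⟩ := h
  obtain ⟨j, -, hj⟩ := Finset.exists_mem_notMem_of_card_lt_card (s := {i, i₀})
    (t := Finset.univ) (Finset.card_le_two.trans_lt (by rw [Finset.card_univ]; omega))
  simp only [Finset.mem_insert, Finset.mem_singleton, not_or] at hj
  exact ⟨j, hj.1, (hi₀ j hj.2).lt_of_ne (ha j)⟩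

namespace AffineBasis

variable {E ι κ : Type*} [AddCommGroup E] [Module ℝ E] (b : AffineBasis ι ℝ E)

theorem coord_linear_ne_zero [Nontrivial ι] (i : ι) : (b.coord i).linear ≠ 0 := by
  obtain ⟨j, hji⟩ := exists_ne i
  intro h
  have := (b.coord i).linearMap_vsub (b i) (b j)
  rw [h, b.coord_apply_eq, b.coord_apply_ne hji.symm] at this
  simp at this

theorem exposedAwayFrom_range {u : E} (h : ∀ i, ∃ j ≠ i, 0 < (b.coord j).linear u) :
    ExposedAwayFrom (range b) u := by
  classical
  rintro _ ⟨i, rfl⟩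
  obtain ⟨j, hji, hj⟩ := h i
  obtain ⟨M, hM0, hM⟩ : ∃ M : ℝ, 0 ≤ M ∧ (b.coord i).linear u < M * (b.coord j).linear u :=
    ((eventually_ge_atTop 0).and
      ((tendsto_id.atTop_mul_const hj).eventually (eventually_gt_atTop _))).exists
  -- `coord i` exposes `b i`; subtracting `M • coord j` keeps that and makes it decrease along `u`.
  refine ⟨(b.coord i).linear - M • (b.coord j).linear, by simpa using hM, ?_⟩
  rintro _ ⟨m, rfl⟩ hm
  have hmi : m ≠ i := by rintro rfl; exact hm rfl
  have hlinear (k : ι) : (b.coord k).linear (b i) - (b.coord k).linear (b m) =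
      b.coord k (b i) - b.coord k (b m) := by
    rw [← map_sub, ← vsub_eq_sub, AffineMap.linearMap_vsub, vsub_eq_sub]
  have hlinear_i := hlinear i
  have hlinear_j := hlinear j
  have hjm : 0 ≤ b.coord j (b m) := by rw [b.coord_apply]; split_ifs <;> norm_num
  rw [b.coord_apply_eq, b.coord_apply_ne hmi.symm] at hlinear_i
  rw [b.coord_apply_ne hji] at hlinear_j
  simp only [LinearMap.sub_apply, LinearMap.smul_apply, smul_eq_mul]
  nlinarith

theorem exposedAwayFrom_range_or_neg [Fintype ι] (hι : 3 ≤ Fintype.card ι) {u : E}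
    (hu : ∀ i, (b.coord i).linear u ≠ 0) :
    ExposedAwayFrom (range b) u ∨ ExposedAwayFrom (range b) (-u) :=
  (exists_ne_pos_or_exists_ne_neg hι hu).imp b.exposedAwayFrom_range fun h =>
    b.exposedAwayFrom_range fun i =>
      (h i).imp fun _ hj => ⟨hj.1, by rw [map_neg]; exact neg_pos.2 hj.2⟩

theorem exists_exposedAwayFrom_range [Fintype ι] [Fintype κ] (b' : AffineBasis κ ℝ E)
    (hι : 3 ≤ Fintype.card ι) (hκ : 3 ≤ Fintype.card κ) :
    ∃ u, ExposedAwayFrom (range b) u ∧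
      (ExposedAwayFrom (range b') (-u) ∨ ExposedAwayFrom (range b') u) := by
  have : Nontrivial ι := Fintype.one_lt_card_iff_nontrivial.1 (by omega)
  have : Nontrivial κ := Fintype.one_lt_card_iff_nontrivial.1 (by omega)
  obtain ⟨u, hu⟩ := exists_forall_apply_ne_zero
    (f := Sum.elim (fun i => (b.coord i).linear) fun k => (b'.coord k).linear) <| by
      rintro (i | k)
      exacts [b.coord_linear_ne_zero i, b'.coord_linear_ne_zero k]
  have hb' := b'.exposedAwayFrom_range_or_neg hκ fun k => hu (.inr k)
  rcases b.exposedAwayFrom_range_or_neg hι fun i => hu (.inl i) with h | h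
  · exact ⟨u, h, hb'.symm⟩
  · exact ⟨-u, h, by rwa [neg_neg]⟩

end AffineBasis

section Gamma

variable {d : ℕ}

def GammaAdj (d : ℕ) (P Q : Set (Pt d)) : Prop := P ∈ Gamma d ∧ Q ∈ Gamma d ∧ Move d P Q

instance : Std.Symm (GammaAdj d) where
  symm _ _ := fun ⟨hP, hQ, h⟩ => ⟨hQ, hP, by unfold Move at h ⊢; tauto⟩

abbrev Linked (d : ℕ) : Set (Pt d) → Set (Pt d) → Prop := Relation.ReflTransGen (GammaAdj d)

theorem Linked.exists_pathLE {P Q : Set (Pt d)} (h : Linked d P Q) (hP : P ∈ Gamma d) :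
    ∃ n, PathLE d (Gamma d) P Q n := by
  induction h with
  | refl => exact ⟨0, 0, fun _ => P, le_rfl, rfl, rfl, fun _ _ => hP, fun _ h => (by omega)⟩
  | @tail Q R _ hQR ih =>
    obtain ⟨-, m, f, -, hf0, hfm, hfΓ, hfmove⟩ := ih
    refine ⟨m + 1, m + 1, fun i => if i ≤ m then f i else R, le_rfl, by simp [hf0], by simp,
      fun i hi => ?_, fun i hi => ?_⟩
    · dsimp only
      split_ifs with him
      exacts [hfΓ i him, hQR.2.1]
    · rcases (Nat.lt_succ_iff.1 hi).lt_or_eq with hi | rfl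
      · simpa [hi.le, Nat.succ_le_of_lt hi] using hfmove i hi
      · simpa [hfm] using hQR.2.2

theorem convexHull_mem_gamma {A : Set (Pt d)} (hA : A.Finite) (hspan : affineSpan ℝ A = ⊤) :
    convexHull ℝ A ∈ Gamma d :=
  ⟨⟨hA.toFinset, by rw [hA.coe_toFinset]⟩, by rw [FullDim, affineSpan_convexHull, hspan]⟩

theorem gammaAdj_convexHull_insert {A : Set (Pt d)} {x : Pt d} (hA : A.Finite)
    (hspan : affineSpan ℝ A = ⊤) (hind : ConvexIndependent ℝ ((↑) : ↥(insert x A) → Pt d)) :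
    GammaAdj d (convexHull ℝ A) (convexHull ℝ (insert x A)) := by
  have hhull : convexHull ℝ (convexHull ℝ A ∪ {x}) = convexHull ℝ (insert x A) := by
    rw [convexHull_convexHull_union_left, union_singleton]
  refine ⟨convexHull_mem_gamma hA hspan,
    convexHull_mem_gamma (hA.insert x) (top_unique (hspan ▸ affineSpan_mono ℝ (subset_insert x A))),
    Or.inl ⟨x, ?_, hhull.symm⟩⟩
  rw [CanInsert, hhull, hind.extremePoints_convexHull,
    (hind.mono (subset_insert x A)).extremePoints_convexHull, union_singleton]

theorem linked_convexHull_of_subset {A X : Set (Pt d)} (hX : X.Finite)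
    (hind : ConvexIndependent ℝ ((↑) : X → Pt d)) (hAX : A ⊆ X) (hspan : affineSpan ℝ A = ⊤) :
    Linked d (convexHull ℝ A) (convexHull ℝ X) := by
  suffices ∀ B ⊆ X, Linked d (convexHull ℝ A) (convexHull ℝ (A ∪ B)) by
    simpa [union_eq_right.2 hAX] using this X subset_rfl
  intro B hBX
  induction B, hX.subset hBX using Set.Finite.induction_on with
  | empty => simpa using Relation.ReflTransGen.refl
  | @insert x B _ hB ih =>
    rw [union_insert]
    exact (ih ((subset_insert x B).trans hBX)).tail <|
      gammaAdj_convexHull_insert ((hX.subset hAX).union hB)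
        (top_unique (hspan ▸ affineSpan_mono ℝ subset_union_left))
        (hind.mono (insert_subset (hBX (mem_insert x B)) (union_subset hAX
          ((subset_insert x B).trans hBX))))

end Gamma

section Simplices

variable {d : ℕ} {ι κ : Type*}

theorem ExposedAwayFrom.eventually_linked {A B : Set (Pt d)} {u : Pt d} (hA : A.Finite)
    (hB : B.Finite) (hAspan : affineSpan ℝ A = ⊤) (hBspan : affineSpan ℝ B = ⊤)
    (hAu : ExposedAwayFrom A u) (hBu : ExposedAwayFrom B (-u)) :
    ∀ᶠ R : ℝ in atTop, Linked d (convexHull ℝ A) (convexHull ℝ (R • u +ᵥ B)) := by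
  filter_upwards [hAu.eventually_convexIndependent_union hA hB hBu] with R hind
  have hX := hA.union (hB.vadd_set (a := R • u))
  exact (linked_convexHull_of_subset hX hind subset_union_left hAspan).trans
    (symm (linked_convexHull_of_subset hX hind subset_union_right
      (affineSpan_vadd_eq_top _ hBspan)))

theorem AffineBasis.three_le_card [Fintype ι] (hd : 2 ≤ d) (b : AffineBasis ι ℝ (Pt d)) :
    3 ≤ Fintype.card ι := by
  rw [b.card_eq_finrank_add_one, Module.finrank_fin_fun]
  omega

theorem AffineBasis.linked_convexHull_vadd [Fintype ι] (hd : 2 ≤ d) (b : AffineBasis ι ℝ (Pt d))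
    (z : Pt d) :
    Linked d (convexHull ℝ (range b)) (convexHull ℝ (z +ᵥ range b)) := by
  obtain ⟨u, hu, -⟩ := b.exists_exposedAwayFrom_range b (b.three_le_card hd) (b.three_le_card hd)
  have hfin := finite_range b
  obtain ⟨R, h₁, h₂⟩ := ((hu.eventually_linked hfin hfin.neg b.tot (affineSpan_neg_eq_top b.tot)
    hu.neg).and ((hu.vadd z).eventually_linked hfin.vadd_set hfin.neg
      (affineSpan_vadd_eq_top z b.tot) (affineSpan_neg_eq_top b.tot) hu.neg)).exists
  exact h₁.trans (symm h₂)

theorem AffineBasis.linked_convexHull_range [Fintype ι] [Fintype κ] (hd : 2 ≤ d)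
    (b : AffineBasis ι ℝ (Pt d)) (b' : AffineBasis κ ℝ (Pt d)) :
    Linked d (convexHull ℝ (range b)) (convexHull ℝ (range b')) := by
  have hfin := finite_range b
  have hfin' := finite_range b'
  obtain ⟨u, hu, hu' | hu'⟩ :=
    b.exists_exposedAwayFrom_range b' (b.three_le_card hd) (b'.three_le_card hd)
  · obtain ⟨R, hR⟩ := (hu.eventually_linked hfin hfin' b.tot b'.tot hu').exists
    exact hR.trans (symm (b'.linked_convexHull_vadd hd (R • u)))
  · obtain ⟨R, h₁, h₂⟩ := ((hu.eventually_linked hfin hfin'.neg b.tot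
      (affineSpan_neg_eq_top b'.tot) hu'.neg).and (hu'.eventually_linked hfin' hfin'.neg b'.tot
        (affineSpan_neg_eq_top b'.tot) hu'.neg)).exists
    exact h₁.trans (symm h₂)

theorem exists_affineBasis_linked {P : Set (Pt d)} (hP : P ∈ Gamma d) :
    ∃ (ι : Type) (_ : Fintype ι) (b : AffineBasis ι ℝ (Pt d)),
      Linked d (convexHull ℝ (range b)) P := by
  obtain ⟨⟨S, rfl⟩, hfull⟩ := hP
  set V := (convexHull ℝ (S : Set (Pt d))).extremePoints ℝ
  have hVfin : V.Finite := S.finite_toSet.subset extremePoints_convexHull_subset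
  have hV : convexHull ℝ V = convexHull ℝ S := by
    rw [← (hVfin.isClosed_convexHull ℝ).closure_eq]
    exact closure_convexHull_extremePoints (S.finite_toSet.isCompact_convexHull ℝ)
      (convex_convexHull ℝ _)
  have hVspan : affineSpan ℝ V = ⊤ := by rw [← affineSpan_convexHull, hV]; exact hfull
  obtain ⟨t, htV, b, hb⟩ := AffineBasis.exists_affine_subbasis hVspan
  have : Fintype t := (hVfin.subset htV).fintype
  refine ⟨t, inferInstance, b, ?_⟩
  rw [hb, Subtype.range_coe, ← hV]
  exact linked_convexHull_of_subset hVfin (convex_convexHull ℝ _).convexIndependent_extremePoints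
    htV (by simpa [hb] using b.tot)

end Simplices

/-- the graph `Γ(d)` is connected. -/
theorem stmt_2 (d : ℕ) (hd : 2 ≤ d) : ConnectedIn d (Gamma d) := by
  intro P hP Q hQ
  obtain ⟨ι, _, b, hb⟩ := exists_affineBasis_linked hP
  obtain ⟨κ, _, b', hb'⟩ := exists_affineBasis_linked hQ
  exact Linked.exists_pathLE ((symm hb).trans ((b.linked_convexHull_range hd b').trans hb')) hP
end

section
/- Let A be a subset of ℝ^d in convex position whose affine hull is all of ℝ^d. For any n ≥ d+1, the d-dimensional polytopes with n or n+1 vertices whose vertex sets are subsets of A induce a connected subgraph of Γ(d) of diameter at most 2n+2; moreover, any two such polytopes having exactly n vertices each are at distance at most 2n in this subgraph. -/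
open Set

/-- The class of `d`-dimensional polytopes with `n` or `n+1` vertices, all of whose
vertices belong to `A`. -/
def AClass (d n : ℕ) (A : Set (Pt d)) : Set (Set (Pt d)) :=
  {P ∈ Gamma d | Set.extremePoints ℝ P ⊆ A ∧ (nVerts d P = n ∨ nVerts d P = n + 1)}

/-!
Since `A` is in convex position, a finite `S ⊆ A` is the vertex set of `convexHull S`, so adding
a point of `A` is always an insertion and removing a point is a deletion as long as the rest
still affinely spans. Any polytope of the class is at most one deletion away from one with
exactly `n` vertices (among `n + 1 ≥ d + 2` affinely spanning points one is affinely dependent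
on the others). Two vertex sets `U`, `V` of size `n` are joined by `2 · #(V \ U)` moves: by the
exchange property of affine spans there are `u ∈ U \ V` and `w ∈ V \ U` such that
`insert w (U.erase u)` still spans, and we insert `w`, then delete `u`.
-/

section AffineSpan

variable {k V P : Type*} [DivisionRing k] [AddCommGroup V] [Module k V] [AddTorsor V P]

theorem mem_affineSpan_insert_exchange {s : Set P} {a b : P}
    (hb : b ∈ affineSpan k (insert a s)) (hbs : b ∉ affineSpan k s) :
    a ∈ affineSpan k (insert b s) := by
  rcases s.eq_empty_or_nonempty with rfl | ⟨p, hp⟩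
  · rw [insert_empty_eq, ← SetLike.mem_coe, AffineSubspace.coe_affineSpan_singleton] at hb
    rw [hb]
    exact mem_affineSpan k (Set.mem_insert _ _)
  have hp' : p ∈ affineSpan k s := mem_affineSpan k hp
  rw [← affineSpan_insert_affineSpan, AffineSubspace.mem_affineSpan_insert_iff hp'] at hb
  obtain ⟨r, q, hq, rfl⟩ := hb
  have hr : r ≠ 0 := by
    rintro rfl
    simp_all
  rw [← affineSpan_insert_affineSpan, AffineSubspace.mem_affineSpan_insert_iff hp']
  refine ⟨r⁻¹, r⁻¹ • (p -ᵥ q) +ᵥ p, AffineSubspace.smul_vsub_vadd_mem _ _ hp' hq hp', ?_⟩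
  rw [eq_vadd_iff_vsub_eq, vsub_vadd_eq_vsub_sub, vadd_vsub_assoc, ← neg_vsub_eq_vsub_rev q p,
    smul_add, smul_smul, inv_mul_cancel₀ hr, one_smul, smul_neg, sub_neg_eq_add]

theorem affineSpan_insert_eq_top_of_exchange {s : Set P} {a b : P}
    (h : affineSpan k (insert a s) = ⊤) (hbs : b ∉ affineSpan k s) :
    affineSpan k (insert b s) = ⊤ := by
  have ha : a ∈ affineSpan k (insert b s) :=
    mem_affineSpan_insert_exchange (h ▸ AffineSubspace.mem_top k V b) hbs
  rw [eq_top_iff, ← h, affineSpan_le]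
  exact Set.insert_subset ha ((Set.subset_insert b s).trans (subset_affineSpan k _))

variable [DecidableEq P]

theorem Finset.exists_affineSpan_erase_eq_top [FiniteDimensional k V] {S : Finset P}
    (hS : affineSpan k (S : Set P) = ⊤) (hcard : Module.finrank k V + 2 ≤ S.card) :
    ∃ u ∈ S, affineSpan k (S.erase u : Set P) = ⊤ := by
  obtain ⟨t, htS, htspan, htind⟩ := exists_affineIndependent k V (S : Set P)
  lift t to Finset P using S.finite_toSet.subset htS
  have ht : t.card ≤ Module.finrank k V + 1 := by
    have := htind.card_le_finrank_succ
    simp only [Finset.coe_sort_coe, Fintype.card_coe] at this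
    exact this.trans (Nat.add_le_add_right (Submodule.finrank_le _) 1)
  obtain ⟨u, huS, hut⟩ := Finset.exists_mem_notMem_of_card_lt_card (s := t) (t := S) (by omega)
  have htu : (t : Set P) ⊆ S.erase u := fun x hx =>
    Finset.mem_erase.2 ⟨fun hxu => hut (hxu ▸ hx), htS hx⟩
  exact ⟨u, huS, eq_top_mono (affineSpan_mono k htu) (htspan.trans hS)⟩

theorem Finset.exists_affineSpan_insert_erase_eq_top {S T : Finset P}
    (hS : affineSpan k (S : Set P) = ⊤) (hT : affineSpan k (T : Set P) = ⊤) {u : P}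
    (hu : u ∈ S) (huT : u ∉ T) (hTS : (T \ S).Nonempty) :
    ∃ w ∈ T \ S, affineSpan k ((insert w (S.erase u) : Finset P) : Set P) = ⊤ := by
  by_cases h : affineSpan k (S.erase u : Set P) = ⊤
  · obtain ⟨w, hw⟩ := hTS
    exact ⟨w, hw,
      eq_top_mono (affineSpan_mono k (Finset.coe_subset.2 (Finset.subset_insert _ _))) h⟩
  obtain ⟨w, hwT, hw⟩ : ∃ w ∈ T, w ∉ affineSpan k (S.erase u : Set P) := by
    by_contra! hc
    exact h (top_unique (hT ▸ affineSpan_le.2 hc))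
  have hwS : w ∉ S := fun hwS =>
    hw (mem_affineSpan k (Finset.mem_erase.2 ⟨fun hwu => huT (hwu ▸ hwT), hwS⟩))
  refine ⟨w, Finset.mem_sdiff.2 ⟨hwT, hwS⟩, ?_⟩
  rw [Finset.coe_insert]
  refine affineSpan_insert_eq_top_of_exchange (a := u) ?_ hw
  rwa [← Finset.coe_insert, Finset.insert_erase hu]

end AffineSpan

theorem Finset.convexHull_extremePoints_convexHull {E : Type*} [NormedAddCommGroup E]
    [NormedSpace ℝ E] (S : Finset E) :
    convexHull ℝ ((convexHull ℝ (S : Set E)).extremePoints ℝ) = convexHull ℝ (S : Set E) := by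
  have hfin := S.finite_toSet.subset (extremePoints_convexHull_subset (𝕜 := ℝ))
  have := closure_convexHull_extremePoints (S.finite_toSet.isCompact_convexHull ℝ)
    (convex_convexHull ℝ _)
  rwa [(hfin.isClosed_convexHull ℝ).closure_eq] at this

theorem exists_finset_of_mem_AClass {d n : ℕ} {A : Set (Pt d)} {P : Set (Pt d)}
    (hP : P ∈ AClass d n A) :
    ∃ S : Finset (Pt d), ↑S ⊆ A ∧ affineSpan ℝ (S : Set (Pt d)) = ⊤ ∧
      S.card = nVerts d P ∧ P = convexHull ℝ (S : Set (Pt d)) := by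
  obtain ⟨⟨⟨S, rfl⟩, hfull⟩, hA, -⟩ := hP
  have hfin := S.finite_toSet.subset (extremePoints_convexHull_subset (𝕜 := ℝ))
  have hhull := S.convexHull_extremePoints_convexHull
  refine ⟨hfin.toFinset, by simpa using hA, ?_, (Set.ncard_eq_toFinset_card _ hfin).symm,
    by simpa using hhull.symm⟩
  rw [Set.Finite.coe_toFinset, ← affineSpan_convexHull, hhull]
  exact hfull

section Paths

variable {d : ℕ} {C : Set (Set (Pt d))} {P Q R : Set (Pt d)}

theorem Move.symm (h : Move d P Q) : Move d Q P := by
  unfold Move at *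
  tauto

theorem PathLE.refl (hP : P ∈ C) : PathLE d C P P 0 :=
  ⟨0, fun _ => P, le_rfl, rfl, rfl, fun _ _ => hP, fun _ h => absurd h (Nat.not_lt_zero _)⟩

theorem PathLE.mono {a b : ℕ} (h : PathLE d C P Q a) (hab : a ≤ b) : PathLE d C P Q b := by
  obtain ⟨m, f, hm, hf⟩ := h
  exact ⟨m, f, hm.trans hab, hf⟩

theorem PathLE.single (hP : P ∈ C) (hQ : Q ∈ C) (h : Move d P Q) : PathLE d C P Q 1 := by
  refine ⟨1, fun i => if i = 0 then P else Q, le_rfl, rfl, rfl, fun i _ => ?_, fun i hi => ?_⟩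
  · dsimp only
    split_ifs <;> assumption
  · obtain rfl : i = 0 := by omega
    exact h

theorem PathLE.symm {a : ℕ} (h : PathLE d C P Q a) : PathLE d C Q P a := by
  obtain ⟨m, f, hm, hf0, hfm, hfC, hfmove⟩ := h
  refine ⟨m, fun i => f (m - i), hm, by simpa, by simpa, fun i _ => hfC _ (by omega), ?_⟩
  intro i hi
  have := (hfmove (m - (i + 1)) (by omega)).symm
  rwa [show m - (i + 1) + 1 = m - i by omega] at this

theorem PathLE.trans {a b : ℕ} (h₁ : PathLE d C P Q a) (h₂ : PathLE d C Q R b) :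
    PathLE d C P R (a + b) := by
  obtain ⟨m₁, f, hm₁, hf0, hfm, hfC, hfmove⟩ := h₁
  obtain ⟨m₂, g, hm₂, hg0, hgm, hgC, hgmove⟩ := h₂
  set h : ℕ → Set (Pt d) := fun i => if i ≤ m₁ then f i else g (i - m₁)
  have hleft : ∀ i ≤ m₁, h i = f i := fun i hi => if_pos hi
  have hright : ∀ i, m₁ ≤ i → h i = g (i - m₁) := by
    intro i hi
    rcases hi.eq_or_lt with rfl | hi
    · rw [hleft _ le_rfl, hfm, Nat.sub_self, hg0]
    · exact if_neg (by omega)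
  refine ⟨m₁ + m₂, h, by omega, by rw [hleft 0 (Nat.zero_le _), hf0], ?_, fun i hi => ?_,
    fun i hi => ?_⟩
  · rw [hright _ (by omega), Nat.add_sub_cancel_left, hgm]
  · rcases le_total i m₁ with hi' | hi'
    · exact hleft i hi' ▸ hfC i hi'
    · exact hright i hi' ▸ hgC _ (by omega)
  · rcases lt_or_ge i m₁ with hi' | hi'
    · rw [hleft i hi'.le, hleft (i + 1) hi']
      exact hfmove i hi'
    · rw [hright i hi', hright (i + 1) (by omega), show i + 1 - m₁ = i - m₁ + 1 by omega]
      exact hgmove _ (by omega)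

end Paths

namespace ConvexPosition

variable {d n : ℕ} {A : Set (Pt d)} {S U V : Finset (Pt d)}

theorem convexHull_mem_AClass (hA : ConvexPosition d A) (hSA : ↑S ⊆ A)
    (hS : affineSpan ℝ (S : Set (Pt d)) = ⊤) (hcard : S.card = n ∨ S.card = n + 1) :
    convexHull ℝ (S : Set (Pt d)) ∈ AClass d n A := by
  refine ⟨⟨⟨S, rfl⟩, ?_⟩, ?_, ?_⟩
  · rwa [FullDim, affineSpan_convexHull]
  · rwa [hA S hSA]
  · rwa [nVerts, hA S hSA, Set.ncard_coe_finset]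

theorem insertMove (hA : ConvexPosition d A) (hSA : ↑S ⊆ A) {x : Pt d} (hx : x ∈ A) :
    InsertMove d (convexHull ℝ (S : Set (Pt d)))
      (convexHull ℝ ((insert x S : Finset (Pt d)) : Set (Pt d))) := by
  have hxSA : ((insert x S : Finset (Pt d)) : Set (Pt d)) ⊆ A := by
    rw [Finset.coe_insert]
    exact Set.insert_subset hx hSA
  have hhull : convexHull ℝ (convexHull ℝ (S : Set (Pt d)) ∪ {x}) =
      convexHull ℝ ((insert x S : Finset (Pt d)) : Set (Pt d)) := by
    rw [convexHull_convexHull_union_left, Finset.coe_insert, Set.union_singleton]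
  refine ⟨x, ?_, hhull.symm⟩
  rw [CanInsert, hhull, hA _ hxSA, hA S hSA, Finset.coe_insert, Set.union_singleton]

theorem deleteMove (hA : ConvexPosition d A) (hSA : ↑S ⊆ A) {v : Pt d} (hv : v ∈ S)
    (hS : affineSpan ℝ ((S.erase v : Finset (Pt d)) : Set (Pt d)) = ⊤) :
    DeleteMove d (convexHull ℝ (S : Set (Pt d)))
      (convexHull ℝ ((S.erase v : Finset (Pt d)) : Set (Pt d))) := by
  refine ⟨v, ⟨?_, ?_⟩, ?_⟩ <;> rw [hA S hSA]
  · exact hv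
  · rwa [FullDim, ← Finset.coe_erase, affineSpan_convexHull]
  · rw [Finset.coe_erase]

theorem exists_pathLE_one (hA : ConvexPosition d A) (hn : d + 1 ≤ n) {P : Set (Pt d)}
    (hP : P ∈ AClass d n A) :
    ∃ U : Finset (Pt d), ↑U ⊆ A ∧ affineSpan ℝ (U : Set (Pt d)) = ⊤ ∧ U.card = n ∧
      PathLE d (AClass d n A) P (convexHull ℝ (U : Set (Pt d))) 1 := by
  obtain ⟨S, hSA, hS, hScard, rfl⟩ := exists_finset_of_mem_AClass hP
  rcases hP.2.2 with hc | hc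
  · exact ⟨S, hSA, hS, hScard.trans hc, (PathLE.refl hP).mono zero_le_one⟩
  obtain ⟨u, huS, hu⟩ := S.exists_affineSpan_erase_eq_top hS
    (by rw [Module.finrank_fin_fun]; omega)
  have hUA : ((S.erase u : Finset (Pt d)) : Set (Pt d)) ⊆ A :=
    (Finset.coe_subset.2 (S.erase_subset u)).trans hSA
  have hUcard : (S.erase u).card = n := by rw [Finset.card_erase_of_mem huS]; omega
  exact ⟨S.erase u, hUA, hu, hUcard, PathLE.single hP
    (hA.convexHull_mem_AClass hUA hu (Or.inl hUcard)) (Or.inr (Or.inl (hA.deleteMove hSA huS hu)))⟩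


theorem exists_pathLE_two_exchange (hA : ConvexPosition d A) (hUA : ↑U ⊆ A) (hVA : ↑V ⊆ A)
    (hU : affineSpan ℝ (U : Set (Pt d)) = ⊤) (hV : affineSpan ℝ (V : Set (Pt d)) = ⊤)
    (hUc : U.card = n) (hUV : U.card = V.card) (hVU : (V \ U).Nonempty) :
    ∃ W : Finset (Pt d), ↑W ⊆ A ∧ affineSpan ℝ (W : Set (Pt d)) = ⊤ ∧ W.card = n ∧
      (V \ W).card < (V \ U).card ∧
      PathLE d (AClass d n A) (convexHull ℝ (U : Set (Pt d)))
        (convexHull ℝ (W : Set (Pt d))) 2 := by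
  obtain ⟨u, hu⟩ : (U \ V).Nonempty := by
    rw [← Finset.card_pos, Finset.card_sdiff_comm hUV]
    exact hVU.card_pos
  rw [Finset.mem_sdiff] at hu
  obtain ⟨w, hw, hW⟩ := U.exists_affineSpan_insert_erase_eq_top hU hV hu.1 hu.2 hVU
  rw [Finset.mem_sdiff] at hw
  have hUwA : ((insert w U : Finset (Pt d)) : Set (Pt d)) ⊆ A := by
    rw [Finset.coe_insert]
    exact Set.insert_subset (hVA hw.1) hUA
  have hWA : ((insert w (U.erase u) : Finset (Pt d)) : Set (Pt d)) ⊆ A :=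
    (Finset.coe_subset.2 (Finset.insert_subset_insert w (U.erase_subset u))).trans hUwA
  have hWc : (insert w (U.erase u)).card = n := by
    rw [Finset.card_insert_of_notMem (fun h => hw.2 (Finset.mem_of_mem_erase h)),
      Finset.card_erase_add_one hu.1, hUc]
  have herase : (insert w U).erase u = insert w (U.erase u) :=
    Finset.erase_insert_of_ne (fun h => hw.2 (h ▸ hu.1))
  have hsdiff : V \ insert w (U.erase u) = (V \ U).erase w := by
    ext x
    simp only [Finset.mem_sdiff, Finset.mem_insert, Finset.mem_erase]
    grind
  have hmemU := hA.convexHull_mem_AClass hUA hU (Or.inl hUc)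
  have hmemUw := hA.convexHull_mem_AClass hUwA
    (eq_top_mono (affineSpan_mono ℝ (Finset.coe_subset.2 (U.subset_insert w))) hU)
    (Or.inr (by rw [Finset.card_insert_of_notMem hw.2, hUc]))
  have hmemW := hA.convexHull_mem_AClass hWA hW (Or.inl hWc)
  have hdel := hA.deleteMove hUwA (Finset.mem_insert_of_mem hu.1) (herase ▸ hW)
  rw [herase] at hdel
  refine ⟨_, hWA, hW, hWc, hsdiff ▸ Finset.card_erase_lt_of_mem (Finset.mem_sdiff.2 hw), ?_⟩
  exact (PathLE.single hmemU hmemUw (Or.inl (hA.insertMove hUA (hVA hw.1)))).trans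
    (PathLE.single hmemUw hmemW (Or.inr (Or.inl hdel)))

theorem pathLE_two_mul_card_sdiff (hA : ConvexPosition d A) (hUA : ↑U ⊆ A) (hVA : ↑V ⊆ A)
    (hU : affineSpan ℝ (U : Set (Pt d)) = ⊤) (hV : affineSpan ℝ (V : Set (Pt d)) = ⊤)
    (hUc : U.card = n) (hVc : V.card = n) :
    PathLE d (AClass d n A) (convexHull ℝ (U : Set (Pt d))) (convexHull ℝ (V : Set (Pt d)))
      (2 * (V \ U).card) := by
  induction hk : (V \ U).card using Nat.strong_induction_on generalizing U with
  | _ k ih =>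
  rcases (V \ U).eq_empty_or_nonempty with h | hVU
  · obtain rfl : U = V := (Finset.eq_of_subset_of_card_le
      (Finset.sdiff_eq_empty_iff_subset.1 h) (by omega)).symm
    exact (PathLE.refl (hA.convexHull_mem_AClass hUA hU (Or.inl hUc))).mono (Nat.zero_le _)
  obtain ⟨W, hWA, hW, hWc, hlt, hpath⟩ :=
    hA.exists_pathLE_two_exchange hUA hVA hU hV hUc (hUc.trans hVc.symm) hVU
  exact (hpath.trans (ih _ (hk ▸ hlt) hWA hW hWc rfl)).mono (by omega)

theorem pathLE_two_mul_of_card_eq (hA : ConvexPosition d A) (hUA : ↑U ⊆ A) (hVA : ↑V ⊆ A)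
    (hU : affineSpan ℝ (U : Set (Pt d)) = ⊤) (hV : affineSpan ℝ (V : Set (Pt d)) = ⊤)
    (hUc : U.card = n) (hVc : V.card = n) :
    PathLE d (AClass d n A) (convexHull ℝ (U : Set (Pt d))) (convexHull ℝ (V : Set (Pt d)))
      (2 * n) :=
  (hA.pathLE_two_mul_card_sdiff hUA hVA hU hV hUc hVc).mono
    (by have := Finset.card_le_card (Finset.sdiff_subset (s := V) (t := U)); omega)

end ConvexPosition

theorem stmt_6_general (d n : ℕ) (hn : d + 1 ≤ n)
    (A : Set (Pt d)) (hA : ConvexPosition d A) :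
    ConnectedIn d (AClass d n A) ∧
    (∀ P ∈ AClass d n A, ∀ Q ∈ AClass d n A, PathLE d (AClass d n A) P Q (2 * n + 2)) ∧
    (∀ P ∈ AClass d n A, ∀ Q ∈ AClass d n A, nVerts d P = n → nVerts d Q = n →
      PathLE d (AClass d n A) P Q (2 * n)) := by
  have hdiam : ∀ P ∈ AClass d n A, ∀ Q ∈ AClass d n A,
      PathLE d (AClass d n A) P Q (2 * n + 2) := by
    intro P hP Q hQ
    obtain ⟨U, hUA, hU, hUc, hPU⟩ := hA.exists_pathLE_one hn hP
    obtain ⟨V, hVA, hV, hVc, hQV⟩ := hA.exists_pathLE_one hn hQ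
    have hUV := hA.pathLE_two_mul_of_card_eq hUA hVA hU hV hUc hVc
    exact (hPU.trans (hUV.trans hQV.symm)).mono (by omega)
  refine ⟨fun P hP Q hQ => ⟨_, hdiam P hP Q hQ⟩, hdiam, fun P hP Q hQ hPn hQn => ?_⟩
  obtain ⟨U, hUA, hU, hUc, rfl⟩ := exists_finset_of_mem_AClass hP
  obtain ⟨V, hVA, hV, hVc, rfl⟩ := exists_finset_of_mem_AClass hQ
  exact hA.pathLE_two_mul_of_card_eq hUA hVA hU hV (hUc.trans hPn) (hVc.trans hQn)

/-- if `A ⊆ ℝ^d` is in convex position and affinely spans `ℝ^d`, the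
polytopes with `n` or `n+1` vertices whose vertex sets lie in `A` induce a connected
subgraph of `Γ(d)` of diameter at most `2n + 2`, and two such polytopes with exactly
`n` vertices are at distance at most `2n`. -/
theorem stmt_6 (d n : ℕ) (hd : 2 ≤ d) (hn : d + 1 ≤ n)
    (A : Set (Pt d)) (hA : ConvexPosition d A) (hAspan : affineSpan ℝ A = ⊤) :
    ConnectedIn d (AClass d n A) ∧
    (∀ P ∈ AClass d n A, ∀ Q ∈ AClass d n A, PathLE d (AClass d n A) P Q (2 * n + 2)) ∧
    (∀ P ∈ AClass d n A, ∀ Q ∈ AClass d n A, nVerts d P = n → nVerts d Q = n →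
      PathLE d (AClass d n A) P Q (2 * n)) :=
  stmt_6_general d n hn A hA
end

section
/- For any positive integer k and any d-dimensional lattice simplex S contained in the hypercube [0,k]^d, there exists at least one lattice point x ∈ ℤ^d ∩ [0,k]^d that can be inserted in S. -/
open Set

/-!
A point `x` can be inserted in a simplex with vertices `b₀, …, b_d` as soon as its barycentric
coordinates have two positive entries and a negative one: the negative entry puts `x` outside the
simplex, and for each vertex `b_j` an affine function built from two coordinates separates `b_j`
from `x` and the other vertices.

The candidates are the lattice points `b_i + s e` with `e` a unit vector and `s ∈ ℤ`. The
barycentric coordinates `β` of the vector `e` satisfy `∑ β_m = 0` and `∑ β_m t_m = 1`, where the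
`t_m ∈ [0, k]` are the (integer) `e`-coordinates of the vertices. A case analysis on the signs of
`β` and on which vertices sit at height `0` or `k` then finds `i` and `s = ±1`; the reflection
`t ↦ k - t`, `β ↦ -β` halves the number of cases.
-/

section Shift

variable {ι : Type*}

def TwoPosOneNeg (w : ι → ℝ) : Prop :=
  (∃ a b, a ≠ b ∧ 0 < w a ∧ 0 < w b) ∧ ∃ c, w c < 0

variable {β : ι → ℝ}

lemma exists_pos_of_sum_eq_zero_of_sum_mul_eq_one [Fintype ι] {u : ι → ℝ}
    (hsum : ∑ m, β m = 0) (hdot : ∑ m, β m * u m = 1) : ∃ p, 0 < β p := by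
  by_contra! h
  have hzero := (Finset.sum_eq_zero_iff_of_nonpos fun m _ ↦ h m).1 hsum
  simp [hzero] at hdot

variable [DecidableEq ι]

/-- With `β` the barycentric coordinates of a unit vector `e` and `t i` the `e`-coordinate of the
vertex `b i`, the point `b i + s • e` has barycentric coordinates `Pi.single i 1 + s • β` and
`e`-coordinate `t i + s`. -/
def HasInsertableShift (k : ℤ) (β : ι → ℝ) (t : ι → ℤ) : Prop :=
  ∃ i, ∃ s : ℤ, 0 ≤ t i + s ∧ t i + s ≤ k ∧ TwoPosOneNeg (Pi.single i 1 + (s : ℝ) • β)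

variable {k : ℤ} {t : ι → ℤ}

lemma twoPosOneNeg_single_add {i p q : ι} (hi : -1 < β i) (hpi : p ≠ i) (hp : 0 < β p)
    (hqi : q ≠ i) (hq : β q < 0) : TwoPosOneNeg (Pi.single i 1 + β) :=
  ⟨⟨i, p, hpi.symm, by simp; linarith, by simp [hpi, hp]⟩, q, by simp [hqi, hq]⟩

lemma HasInsertableShift.of_reflect (h : HasInsertableShift k (-β) (fun m ↦ k - t m)) :
    HasInsertableShift k β t := by
  obtain ⟨i, s, hs₀, hsk, hw⟩ := h
  dsimp only at hs₀ hsk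
  exact ⟨i, -s, by omega, by omega, by simpa using hw⟩

lemma hasInsertableShift_of_up {i p q : ι} (hti₀ : 0 ≤ t i) (hti : t i < k) (hi : -1 < β i)
    (hpi : p ≠ i) (hp : 0 < β p) (hqi : q ≠ i) (hq : β q < 0) : HasInsertableShift k β t :=
  ⟨i, 1, by omega, by omega, by simpa using twoPosOneNeg_single_add hi hpi hp hqi hq⟩

lemma hasInsertableShift_of_down {i p q : ι} (hti₀ : 0 < t i) (hti : t i ≤ k) (hi : β i < 1)
    (hpi : p ≠ i) (hp : β p < 0) (hqi : q ≠ i) (hq : 0 < β q) : HasInsertableShift k β t :=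
  .of_reflect <| hasInsertableShift_of_up (by omega) (by omega) (by simpa using hi) hpi
    (by simpa using hp) hqi (by simpa using hq)

variable [Fintype ι]

lemma hasInsertableShift_of_two_pos_at_top (hk : 1 ≤ k) (hsum : ∑ m, β m = 0)
    (hdot : ∑ m, β m * t m = 1) (ht : ∀ m, 0 ≤ t m ∧ t m ≤ k) (htop : ∀ i, 0 < β i → t i = k)
    {p r q : ι} (hpr : p ≠ r) (hp : 0 < β p) (hr : 0 < β r) (hq : β q < 0) :
    HasInsertableShift k β t := by
  have hweights : ∑ m, β m * ((k : ℝ) - t m) = -1 := by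
    simp only [mul_sub, Finset.sum_sub_distrib, ← Finset.sum_mul, hsum, hdot]
    ring
  by_cases hdown : ∃ n, β n < 0 ∧ t n = k
  · obtain ⟨n, hn, htn⟩ := hdown
    obtain ⟨m, -, hm⟩ := Finset.exists_ne_zero_of_sum_ne_zero (hweights.trans_ne (by norm_num))
    have hmk : t m ≠ k := fun h ↦ hm (by simp [h])
    have hβm : β m < 0 := by
      rcases lt_trichotomy (β m) 0 with h | h | h
      · exact h
      · simp [h] at hm
      · exact absurd (htop m h) hmk
    exact hasInsertableShift_of_down (i := n) (by omega) (ht n).2 (by linarith)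
      (by rintro rfl; exact hmk htn) hβm (by rintro rfl; linarith) hp
  push Not at hdown
  -- `∑ β m * (k - t m - 1) = -1` is a sum of nonpositive terms, two of which are `-β p`, `-β r`
  have hpr_le : β p + β r ≤ 1 := by
    have hnonneg : ∀ m ∈ Finset.univ, 0 ≤ -(β m * ((k : ℝ) - t m - 1)) := by
      intro m _
      rcases lt_or_ge (β m) 0 with h | h
      · have : t m + 1 ≤ k := by have := (ht m).2; have := hdown m h; omega
        have : (1 : ℝ) ≤ k - t m := by
          rw [le_sub_iff_add_le']; exact_mod_cast this
        nlinarith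
      · rcases h.lt_or_eq with h | h
        · rw [htop m h]; simp; linarith
        · simp [← h]
    have hsum' : ∑ m, β m * ((k : ℝ) - t m - 1) = -1 := by
      simp only [mul_sub, Finset.sum_sub_distrib, mul_one, hsum, ← hweights, sub_zero]
    have := Finset.add_le_sum hnonneg (Finset.mem_univ p) (Finset.mem_univ r) hpr
    simp only [htop p hp, htop r hr, Finset.sum_neg_distrib, hsum'] at this
    linarith
  exact hasInsertableShift_of_down (i := p) (by have := htop p hp; omega) (ht p).2 (by linarith)
    (by rintro rfl; linarith) hq hpr.symm hr

lemma hasInsertableShift_of_two_pos (hk : 1 ≤ k) (hsum : ∑ m, β m = 0) (hdot : ∑ m, β m * t m = 1)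
    (ht : ∀ m, 0 ≤ t m ∧ t m ≤ k) {p r q : ι} (hpr : p ≠ r) (hp : 0 < β p) (hr : 0 < β r)
    (hq : β q < 0) : HasInsertableShift k β t := by
  by_cases hup : ∃ i, 0 < β i ∧ t i < k
  · obtain ⟨i, hi, hti⟩ := hup
    obtain ⟨p', hp'i, hp'⟩ : ∃ p', p' ≠ i ∧ 0 < β p' := by
      by_cases hpi : p = i
      · exact ⟨r, hpi ▸ hpr.symm, hr⟩
      · exact ⟨p, hpi, hp⟩
    exact hasInsertableShift_of_up (ht i).1 hti (by linarith) hp'i hp' (by rintro rfl; linarith) hq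
  push Not at hup
  exact hasInsertableShift_of_two_pos_at_top hk hsum hdot ht
    (fun i hi ↦ le_antisymm (ht i).2 (hup i hi)) hpr hp hr hq

theorem hasInsertableShift_of_three_le_card (hι : 3 ≤ Fintype.card ι) (hk : 1 ≤ k)
    (hsum : ∑ m, β m = 0) (hdot : ∑ m, β m * t m = 1) (ht : ∀ m, 0 ≤ t m ∧ t m ≤ k) :
    HasInsertableShift k β t := by
  have hsum' : ∑ m, (-β) m = 0 := by simp [hsum]
  have hdot' : ∑ m, (-β) m * ((k - t m : ℤ) : ℝ) = 1 := by
    simp only [Pi.neg_apply, Int.cast_sub, neg_mul, mul_sub, Finset.sum_neg_distrib,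
      Finset.sum_sub_distrib, ← Finset.sum_mul, hsum, hdot]
    ring
  have ht' : ∀ m, 0 ≤ k - t m ∧ k - t m ≤ k := fun m ↦ by have := ht m; omega
  obtain ⟨p, hp⟩ := exists_pos_of_sum_eq_zero_of_sum_mul_eq_one hsum hdot
  obtain ⟨q, hq⟩ := exists_pos_of_sum_eq_zero_of_sum_mul_eq_one hsum' hdot'
  rw [Pi.neg_apply, neg_pos] at hq
  by_cases hzero : ∃ i, β i = 0
  · obtain ⟨i, hi⟩ := hzero
    have hpi : p ≠ i := by rintro rfl; linarith
    have hqi : q ≠ i := by rintro rfl; linarith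
    rcases (ht i).2.lt_or_eq with hti | hti
    · exact hasInsertableShift_of_up (ht i).1 hti (by linarith) hpi hp hqi hq
    · exact hasInsertableShift_of_down (by omega) (ht i).2 (by linarith) hqi hq hpi hp
  push Not at hzero
  obtain ⟨a, b, hab, hsign⟩ :=
    Fintype.exists_ne_map_eq_of_card_lt (fun m ↦ 0 < β m) (by simp; omega)
  by_cases ha : 0 < β a
  · exact hasInsertableShift_of_two_pos hk hsum hdot ht hab ha (hsign ▸ ha) hq
  · have hb : ¬ 0 < β b := hsign ▸ ha
    refine .of_reflect (hasInsertableShift_of_two_pos hk hsum' hdot' ht' (q := p) hab ?_ ?_ ?_)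
    · simpa using (not_lt.1 ha).lt_of_ne (hzero a)
    · simpa using (not_lt.1 hb).lt_of_ne (hzero b)
    · simpa using hp

end Shift

section Geometry

variable {ι E : Type*}

section Module

variable [AddCommGroup E] [Module ℝ E]

lemma affineIndependent_of_affineSpan_eq_top_of_card_eq_finrank_add_one [Fintype ι] {p : ι → E}
    (hp : affineSpan ℝ (range p) = ⊤) (hc : Fintype.card ι = Module.finrank ℝ E + 1) :
    AffineIndependent ℝ p := by
  rw [affineIndependent_iff_le_finrank_vectorSpan ℝ p hc,
    AffineSubspace.vectorSpan_eq_top_of_affineSpan_eq_top ℝ E E hp, finrank_top]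

namespace AffineBasis

variable (b : AffineBasis ι ℝ E)

lemma coord_add [DecidableEq ι] (i m : ι) (v : E) :
    b.coord m (b i + v) = (Pi.single i 1 : ι → ℝ) m + (b.coord m).linear v := by
  rw [add_comm, ← vadd_eq_add, AffineMap.map_vadd, vadd_eq_add, b.coord_apply, Pi.single_apply,
    add_comm]

lemma coord_linear_eq_sub (m : ι) (v : E) : (b.coord m).linear v = b.coord m v - b.coord m 0 := by
  simpa using (b.coord m).linearMap_vsub v 0

lemma sum_coord_linear [Fintype ι] (v : E) : ∑ m, (b.coord m).linear v = 0 := by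
  simp only [coord_linear_eq_sub, Finset.sum_sub_distrib, sum_coord_apply_eq_one, sub_self]

lemma sum_coord_linear_smul [Fintype ι] (v : E) : ∑ m, (b.coord m).linear v • b m = v := by
  simp only [coord_linear_eq_sub, sub_smul, Finset.sum_sub_distrib,
    linear_combination_coord_eq_self, sub_zero]

variable {b}

lemma notMem_convexHull_range {x : E} {m : ι} (hm : b.coord m x < 0) :
    x ∉ convexHull ℝ (range b) := by
  rw [b.convexHull_eq_nonneg_coord]
  exact fun hx ↦ (hx m).not_gt hm

lemma apply_notMem_convexHull_insert_image_compl {x : E} {a j : ι} (haj : a ≠ j)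
    (ha : 0 < b.coord a x) : b j ∉ convexHull ℝ (insert x (b '' {j}ᶜ)) := by
  -- `f` vanishes on the other vertices, is `≤ 0` at `x`, and is positive at `b j`
  set f : E →ᵃ[ℝ] ℝ := b.coord a x • b.coord j - max (b.coord j x) 0 • b.coord a
  intro hmem
  have hfj : f (b j) ≤ 0 := by
    refine convexHull_min ?_ ((convex_Iic 0).affine_preimage f) hmem
    rintro y (rfl | ⟨i, hi, rfl⟩)
    · simp only [f, mem_preimage, mem_Iic, AffineMap.coe_sub, AffineMap.coe_smul, Pi.sub_apply,
        Pi.smul_apply, smul_eq_mul]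
      nlinarith [le_max_left (b.coord j y) 0]
    · simp only [f, mem_preimage, mem_Iic, AffineMap.coe_sub, AffineMap.coe_smul, Pi.sub_apply,
        Pi.smul_apply, smul_eq_mul, b.coord_apply_ne (Ne.symm hi), mul_zero, zero_sub,
        neg_nonpos]
      exact mul_nonneg (le_max_right _ _) (by rcases eq_or_ne a i with rfl | h <;> simp [*])
  simp [f, b.coord_apply_ne haj] at hfj
  linarith

end AffineBasis

end Module

variable [NormedAddCommGroup E] [NormedSpace ℝ E]

lemma convexHull_extremePoints_convexHull {s : Set E} (hs : s.Finite) :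
    convexHull ℝ (extremePoints ℝ (convexHull ℝ s)) = convexHull ℝ s := by
  rw [← ((hs.subset extremePoints_convexHull_subset).isClosed_convexHull ℝ).closure_eq]
  exact closure_convexHull_extremePoints (hs.isCompact_convexHull ℝ) (convex_convexHull ℝ s)

lemma extremePoints_convexHull_eq_self {s : Set E} (hs : s.Finite)
    (h : ∀ x ∈ s, x ∉ convexHull ℝ (s \ {x})) : extremePoints ℝ (convexHull ℝ s) = s := by
  refine extremePoints_convexHull_subset.antisymm fun x hx ↦ ?_
  by_contra hext
  have hsub : extremePoints ℝ (convexHull ℝ s) ⊆ s \ {x} := fun y hy ↦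
    ⟨extremePoints_convexHull_subset hy, by rintro rfl; exact hext hy⟩
  refine h x hx (convexHull_mono hsub ?_)
  rw [convexHull_extremePoints_convexHull hs]
  exact subset_convexHull ℝ s hx

theorem AffineBasis.extremePoints_convexHull_range_union_singleton [Finite ι]
    {b : AffineBasis ι ℝ E} {x : E} (hx : TwoPosOneNeg fun i ↦ b.coord i x) :
    extremePoints ℝ (convexHull ℝ (range b ∪ {x})) = range b ∪ {x} := by
  obtain ⟨⟨a₁, a₂, h₁₂, h₁, h₂⟩, m, hm⟩ := hx
  refine extremePoints_convexHull_eq_self ((finite_range b).union (finite_singleton x)) ?_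
  rintro y (⟨j, rfl⟩ | rfl)
  · obtain ⟨a, haj, ha⟩ : ∃ a, a ≠ j ∧ 0 < b.coord a x := by
      by_cases h : a₁ = j
      · exact ⟨a₂, h ▸ h₁₂.symm, h₂⟩
      · exact ⟨a₁, h, h₁⟩
    refine fun hmem ↦ b.apply_notMem_convexHull_insert_image_compl haj ha (convexHull_mono ?_ hmem)
    rintro y ⟨⟨i, rfl⟩ | rfl, hy⟩
    · exact Or.inr ⟨i, fun hij ↦ hy (hij ▸ rfl), rfl⟩
    · exact Or.inl rfl
  · exact fun hmem ↦ b.notMem_convexHull_range hm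
      (convexHull_mono (fun y hy ↦ hy.1.resolve_right hy.2) hmem)

end Geometry

theorem exists_latticePt_mem_cube_twoPosOneNeg {ι : Type*} [Fintype ι] {d k : ℕ}
    (hι : 3 ≤ Fintype.card ι) (hk : 1 ≤ k) (c : Fin d) (b : AffineBasis ι ℝ (Pt d))
    (hlat : ∀ i, IsLatticePt d (b i)) (hcube : ∀ i, b i ∈ Cube d k) :
    ∃ x, IsLatticePt d x ∧ x ∈ Cube d k ∧ TwoPosOneNeg fun i ↦ b.coord i x := by
  classical
  set e : Pt d := Pi.single c 1
  choose t ht using fun i ↦ hlat i c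
  have hdot : ∑ m, (b.coord m).linear e * t m = 1 := by
    simpa [e, ht] using congrFun (b.sum_coord_linear_smul e) c
  have hbounds : ∀ m, 0 ≤ t m ∧ t m ≤ (k : ℤ) := fun m ↦ by
    have := hcube m c
    rw [ht m] at this
    exact ⟨by exact_mod_cast this.1, by exact_mod_cast this.2⟩
  obtain ⟨i, s, hs₀, hsk, hw⟩ := hasInsertableShift_of_three_le_card hι (by exact_mod_cast hk)
    (b.sum_coord_linear e) hdot hbounds
  refine ⟨b i + (s : ℝ) • e, fun c' ↦ ?_, fun c' ↦ ?_, ?_⟩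
  · obtain ⟨z, hz⟩ := hlat i c'
    by_cases h : c' = c
    · subst h
      exact ⟨t i + s, by simp [e, ht]⟩
    · exact ⟨z, by simp [e, h, hz]⟩
  · by_cases h : c' = c
    · subst h
      simp only [e, Pi.add_apply, Pi.smul_apply, Pi.single_eq_same, smul_eq_mul, mul_one, ht]
      exact ⟨by exact_mod_cast hs₀, by exact_mod_cast hsk⟩
    · simpa [e, h] using hcube i c'
  · convert hw using 1
    ext m
    simp only [AffineBasis.coord_add, map_smul, smul_eq_mul, Pi.add_apply, Pi.smul_apply]

/-- for any positive `k`, some lattice point of `[0,k]^d` can be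
inserted in any `d`-dimensional lattice simplex contained in `[0,k]^d`. -/
theorem stmt_9 (d k : ℕ) (hd : 2 ≤ d) (hk : 1 ≤ k) (S : Set (Pt d))
    (hS : IsPolytope d S) (hSd : FullDim d S) (hlat : IsLatticePoly d S)
    (hsub : S ⊆ Cube d k) (hsimp : nVerts d S = d + 1) :
    ∃ x : Pt d, IsLatticePt d x ∧ x ∈ Cube d k ∧ CanInsert d S x := by
  obtain ⟨F, rfl⟩ := hS
  set V := extremePoints ℝ (convexHull ℝ (F : Set (Pt d)))
  have hVS : convexHull ℝ V = convexHull ℝ F := convexHull_extremePoints_convexHull F.finite_toSet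
  have := (F.finite_toSet.subset extremePoints_convexHull_subset : V.Finite).fintype
  have hcard : Fintype.card V = d + 1 := by
    rwa [← Set.toFinset_card, ← Set.ncard_eq_toFinset_card']
  have hspan : affineSpan ℝ (range ((↑) : V → Pt d)) = ⊤ := by
    rwa [Subtype.range_coe, ← affineSpan_convexHull, hVS]
  let b : AffineBasis V ℝ (Pt d) :=
    ⟨_, affineIndependent_of_affineSpan_eq_top_of_card_eq_finrank_add_one hspan
      (by simpa using hcard), hspan⟩
  obtain ⟨x, hxlat, hxcube, hx⟩ := exists_latticePt_mem_cube_twoPosOneNeg (by omega) hk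
    ⟨0, by omega⟩ b (fun v ↦ hlat v v.2) (fun v ↦ hsub (extremePoints_subset v.2))
  refine ⟨x, hxlat, hxcube, ?_⟩
  have hb : range b = V := Subtype.range_coe
  change extremePoints ℝ (convexHull ℝ (convexHull ℝ F ∪ {x})) = V ∪ {x}
  rw [← hVS, convexHull_convexHull_union_left, ← hb,
    b.extremePoints_convexHull_range_union_singleton hx]
end

section
/- For any integer n ≥ 3 distinct from 3 and from 5 (that is, n = 4 or n ≥ 6), the subgraph induced in Λ(2) by the lattice polygons with n or n+1 vertices is disconnected. -/
open Set

/-!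
Write `tri c = c (c - 1) / 2`. For `n = 2k` take the lattice polygon with lower chain
`(c, tri c)`, `0 ≤ c ≤ k`, and upper chain `(c, (k - 1) c - tri c)`; for `n = 2k + 1` take the
same lower chain, the upper chain `(c, k c - tri c)`, `0 < c < k`, and the vertex `(k, tri k + 1)`.
Since most pairs of consecutive edge vectors are lattice bases, every lattice point `x` that is not
a vertex lies in the polygon or in the closed cone behind some vertex `u` spanned by two other
vertices `w₁`, `w₂`, so that `u` falls into the triangle `w₁ w₂ x`. Hence no lattice point can be
inserted, and deleting a vertex leaves `n - 1` vertices: the polygon is an isolated vertex of the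
subgraph, which also contains its translate by `(1, 0)`.
-/

theorem convexHull_union_singleton_of_mem {E : Type*} [AddCommGroup E] [Module ℝ E] {P : Set E}
    (hP : Convex ℝ P) {x : E} (hx : x ∈ P) : convexHull ℝ (P ∪ {x}) = P := by
  rw [union_eq_self_of_subset_right (singleton_subset_iff.2 hx), hP.convexHull_eq]

theorem mem_extremePoints_convexHull_of_forall_lt {E : Type*} [AddCommGroup E] [Module ℝ E]
    {s : Set E} {x : E} (f : E →ₗ[ℝ] ℝ) (hx : x ∈ s) (h : ∀ y ∈ s, y ≠ x → f x < f y) :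
    x ∈ (convexHull ℝ s).extremePoints ℝ := by
  rw [(convex_convexHull ℝ s).mem_extremePoints_iff_convex_sdiff]
  refine ⟨subset_convexHull ℝ s hx, ?_⟩
  suffices convexHull ℝ s \ {x} = convexHull ℝ s ∩ {y | f x < f y} by
    rw [this]
    exact (convex_convexHull ℝ s).inter (convex_halfSpace_gt f.isLinear _)
  refine Set.ext fun y => ⟨fun ⟨hy, hyx⟩ => ⟨hy, ?_⟩, fun ⟨hy, hfy⟩ =>
    ⟨hy, fun hyx => lt_irrefl (f x) (eq_of_mem_singleton hyx ▸ hfy :)⟩⟩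
  have hs : s = insert x (s \ {x}) := (insert_sdiff_self_of_mem hx).symm
  rcases (s \ {x}).eq_empty_or_nonempty with h₀ | hne
  · rw [hs, h₀, insert_empty_eq, convexHull_singleton] at hy
    exact absurd hy hyx
  rw [hs, convexHull_insert hne, mem_convexJoin] at hy
  obtain ⟨x', hx', z, hz, θ, η, hθ, hη, hθη, rfl⟩ := hy
  rw [eq_of_mem_singleton hx'] at hyx ⊢
  have hfz : f x < f z :=
    convexHull_min (fun w hw => h w hw.1 hw.2) (convex_halfSpace_gt f.isLinear _) hz
  have hη₀ : η ≠ 0 := by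
    rintro rfl
    rw [add_zero] at hθη
    simp [hθη] at hyx
  simp only [mem_ofPred_eq, map_add, map_smul, smul_eq_mul]
  obtain rfl : θ = 1 - η := by linarith
  nlinarith [mul_pos (lt_of_le_of_ne hη (Ne.symm hη₀)) (sub_pos.2 hfz)]

theorem eq_zero_of_image_add_eq {G : Type*} [AddCommGroup G] [IsAddTorsionFree G] [DecidableEq G]
    {V : Finset G} (hV : V.Nonempty) {c : G} (h : V.image (· + c) = V) : c = 0 := by
  have hsum := congrArg (fun s => ∑ v ∈ s, v) h
  simp only [Finset.sum_image fun _ _ _ _ => add_right_cancel, Finset.sum_add_distrib,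
    Finset.sum_const, add_eq_left] at hsum
  exact (smul_eq_zero.1 hsum).resolve_left (Finset.card_ne_zero.2 hV)

section Polytope

variable {d : ℕ}

theorem IsPolytope.finite_extremePoints {P : Set (Pt d)} (hP : IsPolytope d P) :
    (P.extremePoints ℝ).Finite := by
  obtain ⟨S, rfl⟩ := hP
  exact S.finite_toSet.subset extremePoints_convexHull_subset

theorem IsPolytope.convexHull_extremePoints {P : Set (Pt d)} (hP : IsPolytope d P) :
    convexHull ℝ (P.extremePoints ℝ) = P := by
  obtain ⟨S, rfl⟩ := hP
  have h := closure_convexHull_extremePoints (S.finite_toSet.isCompact_convexHull (𝕜 := ℝ))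
    (convex_convexHull ℝ (S : Set (Pt d)))
  rwa [((IsPolytope.finite_extremePoints ⟨S, rfl⟩).isClosed_convexHull ℝ).closure_eq] at h

theorem IsPolytope.convex {P : Set (Pt d)} (hP : IsPolytope d P) : Convex ℝ P := by
  obtain ⟨S, rfl⟩ := hP
  exact convex_convexHull ℝ _

theorem canInsert_of_eq_convexHull_sdiff {P R : Set (Pt d)} (hP : IsPolytope d P)
    (hR : IsPolytope d R) {v : Pt d} (hv : v ∈ R.extremePoints ℝ)
    (hPv : P = convexHull ℝ (R.extremePoints ℝ \ {v})) (hn : nVerts d R ≤ nVerts d P + 1) :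
    v ∉ P.extremePoints ℝ ∧ CanInsert d P v := by
  have hRfin := hR.finite_extremePoints
  have hsub : P.extremePoints ℝ ⊆ R.extremePoints ℝ \ {v} := hPv ▸ extremePoints_convexHull_subset
  have hPeq : P.extremePoints ℝ = R.extremePoints ℝ \ {v} :=
    eq_of_subset_of_ncard_le hsub
      (by rw [ncard_sdiff_singleton_of_mem hv]; exact Nat.sub_le_of_le_add hn)
      (hRfin.subset sdiff_subset)
  have hRins : R.extremePoints ℝ = P.extremePoints ℝ ∪ {v} := by
    rw [hPeq, sdiff_union_self, union_eq_self_of_subset_right (singleton_subset_iff.2 hv)]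
  refine ⟨fun h => (hPeq ▸ h).2 rfl, ?_⟩
  rw [CanInsert, ← hRins]
  conv_lhs => rw [← hP.convexHull_extremePoints, convexHull_convexHull_union_left, ← hRins,
    hR.convexHull_extremePoints]

theorem Move.eq_of_forall_not_canInsert {n : ℕ} {P R : Set (Pt d)} (hPR : Move d P R)
    (hP : IsPolytope d P) (hPn : nVerts d P = n)
    (hins : ∀ x, IsLatticePt d x → x ∉ P.extremePoints ℝ → ¬ CanInsert d P x)
    (hR : IsPolytope d R) (hRlat : IsLatticePoly d R)
    (hRn : nVerts d R = n ∨ nVerts d R = n + 1) : R = P := by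
  have hPfin := hP.finite_extremePoints
  rcases hPR with ⟨x, hx, rfl⟩ | ⟨v, ⟨hv, -⟩, rfl⟩ | ⟨x, hx, hPx⟩ | ⟨v, ⟨hv, -⟩, hPv⟩
  · by_cases hxP : x ∈ P.extremePoints ℝ
    · exact convexHull_union_singleton_of_mem hP.convex (extremePoints_subset hxP)
    · refine absurd hx (hins x (hRlat x ?_) hxP)
      rw [CanInsert] at hx
      exact hx ▸ mem_union_right _ rfl
  · have hle := ncard_le_ncard
      (extremePoints_convexHull_subset (𝕜 := ℝ) (A := P.extremePoints ℝ \ {v}))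
      (hPfin.subset sdiff_subset)
    rw [ncard_sdiff_singleton_of_mem hv] at hle
    have : 0 < n := hPn ▸ (ncard_pos hPfin).2 ⟨v, hv⟩
    rw [nVerts] at hPn hRn
    omega
  · by_cases hxR : x ∈ R.extremePoints ℝ
    · rw [hPx, convexHull_union_singleton_of_mem hR.convex (extremePoints_subset hxR)]
    · rw [CanInsert, ← hPx] at hx
      have hxP : x ∈ P.extremePoints ℝ := hx ▸ mem_union_right _ rfl
      have hRP : R.extremePoints ℝ = P.extremePoints ℝ \ {x} := by
        rw [hx, union_sdiff_right, sdiff_eq_left.2 (disjoint_singleton_right.2 hxR)]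
      have : 0 < n := hPn ▸ (ncard_pos hPfin).2 ⟨x, hxP⟩
      rw [nVerts, hRP, ncard_sdiff_singleton_of_mem hxP, ← nVerts, hPn] at hRn
      omega
  · obtain ⟨hvP, hvins⟩ := canInsert_of_eq_convexHull_sdiff hP hR hv hPv (by omega)
    exact absurd hvins (hins v (hRlat v hv) hvP)

theorem not_connectedIn_of_isolated {C : Set (Set (Pt d))} {P Q : Set (Pt d)} (hP : P ∈ C)
    (hQ : Q ∈ C) (hQP : Q ≠ P) (hiso : ∀ R ∈ C, Move d P R → R = P) : ¬ ConnectedIn d C := by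
  intro hC
  obtain ⟨-, m, f, -, hf0, hfm, hfC, hfmove⟩ := hC P hP Q hQ
  have hfP : ∀ i ≤ m, f i = P := by
    intro i
    induction i with
    | zero => exact fun _ => hf0
    | succ i ih =>
      intro hi
      exact hiso _ (hfC _ hi) (ih (by omega) ▸ hfmove i (by omega))
  exact hQP (hfm ▸ hfP m le_rfl)

end Polytope

namespace LatticePolygon

def toPt (z : ℤ × ℤ) : Pt 2 := ![(z.1 : ℝ), z.2]

@[simp] theorem toPt_apply_zero (z : ℤ × ℤ) : toPt z 0 = z.1 := rfl
@[simp] theorem toPt_apply_one (z : ℤ × ℤ) : toPt z 1 = z.2 := rfl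

theorem toPt_injective : Function.Injective toPt := fun z w h => by
  have h₀ := congrFun h 0
  have h₁ := congrFun h 1
  simp only [toPt_apply_zero, toPt_apply_one, Int.cast_inj] at h₀ h₁
  exact Prod.ext h₀ h₁

theorem isLatticePt_toPt (z : ℤ × ℤ) : IsLatticePt 2 (toPt z) := by
  intro i
  fin_cases i
  exacts [⟨z.1, rfl⟩, ⟨z.2, rfl⟩]

theorem exists_toPt_eq {x : Pt 2} (hx : IsLatticePt 2 x) : ∃ z, toPt z = x := by
  obtain ⟨a, ha⟩ := hx 0
  obtain ⟨b, hb⟩ := hx 1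
  exact ⟨(a, b), funext fun i => by fin_cases i <;> simp [ha, hb]⟩

def cross (p q : ℤ × ℤ) : ℤ := p.1 * q.2 - p.2 * q.1

theorem toPt_mem_convexHull_of_smul_eq {u w₁ w₂ w₃ : ℤ × ℤ} {a b c : ℤ} (ha : 0 ≤ a)
    (hb : 0 ≤ b) (hc : 0 ≤ c) (habc : 0 < a + b + c)
    (h : (a + b + c) • u = a • w₁ + b • w₂ + c • w₃) :
    toPt u ∈ convexHull ℝ {toPt w₁, toPt w₂, toPt w₃} := by
  have hpos : (0 : ℝ) < a + b + c := by exact_mod_cast habc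
  have key : Finset.univ.centerMass ![(a : ℝ), b, c] ![toPt w₁, toPt w₂, toPt w₃] = toPt u := by
    rw [Finset.centerMass, Fin.sum_univ_three, Fin.sum_univ_three]
    simp only [Matrix.cons_val_zero, Matrix.cons_val_one, Matrix.cons_val_two, Matrix.tail_cons,
      Matrix.head_cons]
    rw [inv_smul_eq_iff₀ hpos.ne']
    funext i
    fin_cases i
    · simpa using (congrArg (fun z : ℤ × ℤ => (z.1 : ℝ)) h).symm
    · simpa using (congrArg (fun z : ℤ × ℤ => (z.2 : ℝ)) h).symm
  rw [← key]
  refine Finset.centerMass_mem_convexHull _ (fun i _ => ?_) (by simpa [Fin.sum_univ_three]) ?_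
  · fin_cases i <;> simp [ha, hb, hc]
  · intro i _
    fin_cases i <;> simp

/-- `x` lies in the closed angle with apex `u` spanned by `u - w₁` and `u - w₂`; then `u` lies
in the triangle `w₁ w₂ x`. -/
def InCone (u w₁ w₂ x : ℤ × ℤ) : Prop :=
  0 < cross (u - w₁) (u - w₂) ∧ 0 ≤ cross (u - w₁) (x - u) ∧ 0 ≤ cross (x - u) (u - w₂)

theorem InCone.mem_convexHull {u w₁ w₂ x : ℤ × ℤ} (h : InCone u w₁ w₂ x) :
    toPt u ∈ convexHull ℝ {toPt w₁, toPt w₂, toPt x} :=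
  -- Cramer's rule for `x - u` in the basis `u - w₁`, `u - w₂`
  toPt_mem_convexHull_of_smul_eq h.2.2 h.2.1 h.1.le (by linarith [h.1, h.2.1, h.2.2])
    (by ext <;> simp only [cross, Prod.fst_add, Prod.snd_add, Prod.smul_fst, Prod.smul_snd,
      Prod.fst_sub, Prod.snd_sub, smul_eq_mul] <;> ring)

theorem InCone.left_ne {u w₁ w₂ x : ℤ × ℤ} (h : InCone u w₁ w₂ x) : w₁ ≠ u := by
  rintro rfl
  simp [InCone, cross] at h

theorem InCone.right_ne {u w₁ w₂ x : ℤ × ℤ} (h : InCone u w₁ w₂ x) : w₂ ≠ u := by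
  rintro rfl
  simp [InCone, cross] at h

theorem inCone_sub_iff (c u w₁ w₂ x : ℤ × ℤ) :
    InCone (c - u) (c - w₁) (c - w₂) (c - x) ↔ InCone u w₁ w₂ x := by
  simp only [InCone, cross, Prod.fst_sub, Prod.snd_sub]
  ring_nf

/-- Inserting `x` into the polygon spanned by `V` swallows a point of `V`, or `x` already lies in
the polygon. -/
def Blocked (V : Set (ℤ × ℤ)) (x : ℤ × ℤ) : Prop :=
  (∃ u ∈ V, ∃ w₁ ∈ V, ∃ w₂ ∈ V, InCone u w₁ w₂ x) ∨
    ∃ w₁ ∈ V, ∃ w₂ ∈ V, ∃ a b : ℤ, 0 ≤ a ∧ 0 ≤ b ∧ 0 < a + b ∧ (a + b) • x = a • w₁ + b • w₂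

theorem Blocked.extremePoints_ne {V : Set (ℤ × ℤ)} {x : ℤ × ℤ} (hx : x ∉ V) (h : Blocked V x) :
    (convexHull ℝ (toPt '' insert x V)).extremePoints ℝ ≠ toPt '' insert x V := by
  intro heq
  have hind := (convex_convexHull ℝ (toPt '' insert x V)).convexIndependent_extremePoints
  rw [heq, convexIndependent_set_iff_notMem_convexHull_sdiff] at hind
  have hmem : ∀ w ∈ insert x V, ∀ u, w ≠ u → toPt w ∈ toPt '' insert x V \ {toPt u} :=
    fun w hw u hwu => ⟨mem_image_of_mem _ hw, fun h => hwu (toPt_injective h)⟩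
  have hne : ∀ w ∈ V, w ≠ x := fun w hw h => hx (h ▸ hw)
  rcases h with ⟨u, hu, w₁, hw₁, w₂, hw₂, hcone⟩ | ⟨w₁, hw₁, w₂, hw₂, a, b, ha, hb, hab, h⟩
  · refine hind _ (mem_image_of_mem _ (mem_insert_of_mem _ hu))
      (convexHull_mono ?_ hcone.mem_convexHull)
    simp only [insert_subset_iff, singleton_subset_iff]
    exact ⟨hmem _ (mem_insert_of_mem _ hw₁) _ hcone.left_ne,
      hmem _ (mem_insert_of_mem _ hw₂) _ hcone.right_ne,
      hmem _ (mem_insert _ _) _ (hne u hu).symm⟩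
  · refine hind _ (mem_image_of_mem _ (mem_insert _ _)) (convexHull_mono ?_
      (toPt_mem_convexHull_of_smul_eq (w₃ := w₂) (c := 0) ha hb le_rfl (by omega)
        (by rwa [add_zero, zero_smul, add_zero])))
    simp only [insert_subset_iff, singleton_subset_iff]
    have h₁ := hmem _ (mem_insert_of_mem _ hw₁) x (hne w₁ hw₁)
    have h₂ := hmem _ (mem_insert_of_mem _ hw₂) x (hne w₂ hw₂)
    exact ⟨h₁, h₂, h₂⟩

theorem Blocked.of_image_sub {V : Set (ℤ × ℤ)} {x : ℤ × ℤ} (c : ℤ × ℤ)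
    (h : Blocked ((c - ·) '' V) (c - x)) : Blocked V x := by
  rcases h with ⟨_, ⟨u, hu, rfl⟩, _, ⟨w₁, hw₁, rfl⟩, _, ⟨w₂, hw₂, rfl⟩, hcone⟩ |
    ⟨_, ⟨w₁, hw₁, rfl⟩, _, ⟨w₂, hw₂, rfl⟩, a, b, ha, hb, hab, h⟩
  · exact Or.inl ⟨u, hu, w₁, hw₁, w₂, hw₂, (inCone_sub_iff c u w₁ w₂ x).1 hcone⟩
  · refine Or.inr ⟨w₁, hw₁, w₂, hw₂, a, b, ha, hb, hab, ?_⟩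
    rw [smul_sub, smul_sub, smul_sub, add_smul] at h
    linear_combination -h

theorem Blocked.mono {V W : Set (ℤ × ℤ)} (hVW : V ⊆ W) {x : ℤ × ℤ} (h : Blocked V x) :
    Blocked W x := by
  rcases h with ⟨u, hu, w₁, hw₁, w₂, hw₂, h⟩ | ⟨w₁, hw₁, w₂, hw₂, h⟩
  exacts [Or.inl ⟨u, hVW hu, w₁, hVW hw₁, w₂, hVW hw₂, h⟩, Or.inr ⟨w₁, hVW hw₁, w₂, hVW hw₂, h⟩]

theorem blocked_of_fst_nonpos {V : Set (ℤ × ℤ)} {t : ℤ} (ht : 1 ≤ t) (h₀ : (0, 0) ∈ V)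
    (h₁ : (1, 0) ∈ V) (h₂ : (2, 1) ∈ V) (h₃ : (1, t) ∈ V) (h₄ : (2, 2 * t - 1) ∈ V)
    {x : ℤ × ℤ} (hx : x.1 ≤ 0) : Blocked V x := by
  obtain ⟨a, b⟩ := x
  refine Or.inl ?_
  simp only [InCone, cross, Prod.fst_sub, Prod.snd_sub] at hx ⊢
  rcases le_or_gt 1 b with hb | hb
  · exact ⟨_, h₃, _, h₀, _, h₄, by nlinarith, by nlinarith, by nlinarith⟩
  rcases le_or_gt (t * a) b with hb' | hb'
  · exact ⟨_, h₀, _, h₁, _, h₃, by nlinarith, by nlinarith, by nlinarith⟩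
  · exact ⟨_, h₁, _, h₂, _, h₀, by nlinarith, by nlinarith, by nlinarith⟩

theorem blocked_of_column {V : Set (ℤ × ℤ)} {a y₁ y₂ l h : ℤ} (h₁ : (a - 1, y₁) ∈ V)
    (h₂ : (a + 1, y₂) ∈ V) (hl : (a, l) ∈ V) (hh : (a, h) ∈ V) (hlo : 2 * l < y₁ + y₂)
    (hhi : y₁ + y₂ < 2 * h) (b : ℤ) : Blocked V (a, b) := by
  simp only [Blocked, InCone, cross, Prod.fst_sub, Prod.snd_sub]
  rcases le_or_gt b l with hbl | hlb
  · exact Or.inl ⟨_, hl, _, h₂, _, h₁, by linarith, by linarith, by linarith⟩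
  rcases lt_or_ge b h with hbh | hhb
  · refine Or.inr ⟨_, hl, _, hh, h - b, b - l, by omega, by omega, by omega, ?_⟩
    ext <;> simp only [Prod.fst_add, Prod.snd_add, Prod.smul_fst, Prod.smul_snd, smul_eq_mul] <;>
      ring
  · exact Or.inl ⟨_, hh, _, h₁, _, h₂, by linarith, by linarith, by linarith⟩

theorem blocked_of_vertical_edge {V : Set (ℤ × ℤ)} {p q s t : ℤ} (h₁ : (p, q) ∈ V)
    (h₂ : (p, q + 1) ∈ V) (h₃ : (p - 1, q - s) ∈ V) (h₄ : (p - 1, q + 1 - t) ∈ V) (hts : t ≤ s)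
    {x : ℤ × ℤ} (hx : p ≤ x.1) : Blocked V x := by
  obtain ⟨a, b⟩ := x
  refine Or.inl ?_
  simp only [InCone, cross, Prod.fst_sub, Prod.snd_sub] at hx ⊢
  rcases le_or_gt (b - q) (s * (a - p)) with hb | hb
  · exact ⟨_, h₁, _, h₂, _, h₃, by nlinarith, by nlinarith, by nlinarith⟩
  · exact ⟨_, h₂, _, h₄, _, h₁, by nlinarith, by nlinarith, by nlinarith⟩

def IsVertexSet (V : Set (ℤ × ℤ)) : Prop :=
  ∀ v ∈ V, ∃ α β : ℤ, ∀ w ∈ V, w ≠ v → α * v.1 + β * v.2 < α * w.1 + β * w.2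

theorem IsVertexSet.extremePoints_convexHull {V : Set (ℤ × ℤ)} (hV : IsVertexSet V) :
    (convexHull ℝ (toPt '' V)).extremePoints ℝ = toPt '' V := by
  refine subset_antisymm extremePoints_convexHull_subset ?_
  rintro _ ⟨v, hv, rfl⟩
  obtain ⟨α, β, h⟩ := hV v hv
  refine mem_extremePoints_convexHull_of_forall_lt
    ((α : ℝ) • LinearMap.proj 0 + (β : ℝ) • LinearMap.proj 1) (mem_image_of_mem _ hv) ?_
  rintro _ ⟨w, hw, rfl⟩ hwv
  have := h w hw fun h => hwv (h ▸ rfl)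
  simp only [LinearMap.add_apply, LinearMap.smul_apply, LinearMap.proj_apply, toPt_apply_zero,
    toPt_apply_one, smul_eq_mul]
  exact_mod_cast this

theorem IsVertexSet.image_add {V : Set (ℤ × ℤ)} (hV : IsVertexSet V) (c : ℤ × ℤ) :
    IsVertexSet ((· + c) '' V) := by
  rintro _ ⟨v, hv, rfl⟩
  obtain ⟨α, β, h⟩ := hV v hv
  refine ⟨α, β, ?_⟩
  rintro _ ⟨w, hw, rfl⟩ hwv
  have := h w hw fun h => hwv (h ▸ rfl)
  simp only [Prod.fst_add, Prod.snd_add]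
  linarith

theorem fullDim_of_cross_ne_zero {s : Set (Pt 2)} {p q r : ℤ × ℤ} (hp : toPt p ∈ s)
    (hq : toPt q ∈ s) (hr : toPt r ∈ s) (h : cross (q - p) (r - p) ≠ 0) : FullDim 2 s := by
  have hD : ((q.1 - p.1) * (r.2 - p.2) - (q.2 - p.2) * (r.1 - p.1) : ℝ) ≠ 0 := by
    simpa [cross] using (Int.cast_ne_zero (α := ℝ)).2 h
  have hli : LinearIndependent ℝ ![toPt q - toPt p, toPt r - toPt p] := by
    refine LinearIndependent.pair_iff.2 fun a b hab => ?_
    have h₀ := congrFun hab 0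
    have h₁ := congrFun hab 1
    simp only [Pi.add_apply, Pi.smul_apply, Pi.sub_apply, toPt_apply_zero, toPt_apply_one,
      smul_eq_mul, Pi.zero_apply] at h₀ h₁
    constructor
    · refine (mul_eq_zero.1 ?_).resolve_right hD
      linear_combination (r.2 - p.2 : ℝ) * h₀ - (r.1 - p.1 : ℝ) * h₁
    · refine (mul_eq_zero.1 ?_).resolve_right hD
      linear_combination (q.1 - p.1 : ℝ) * h₁ - (q.2 - p.2 : ℝ) * h₀
  rw [FullDim,
    AffineSubspace.affineSpan_eq_top_iff_vectorSpan_eq_top_of_nonempty ℝ (Pt 2) (Pt 2) ⟨_, hp⟩,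
    eq_top_iff, ← hli.span_eq_top_of_card_eq_finrank' (by simp), Submodule.span_le]
  rintro _ ⟨i, rfl⟩
  fin_cases i
  exacts [vsub_mem_vectorSpan ℝ hq hp, vsub_mem_vectorSpan ℝ hr hp]

theorem IsVertexSet.convexHull_mem_lambda {V : Finset (ℤ × ℤ)} (hV : IsVertexSet V)
    {p q r : ℤ × ℤ} (hp : p ∈ V) (hq : q ∈ V) (hr : r ∈ V) (hpqr : cross (q - p) (r - p) ≠ 0) :
    convexHull ℝ (toPt '' V) ∈ Lambda 2 := by
  have hsub := subset_convexHull ℝ (toPt '' V)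
  refine ⟨⟨V.image toPt, by rw [Finset.coe_image]⟩, fullDim_of_cross_ne_zero
    (hsub (mem_image_of_mem _ hp)) (hsub (mem_image_of_mem _ hq)) (hsub (mem_image_of_mem _ hr))
    hpqr, ?_⟩
  rw [IsLatticePoly, hV.extremePoints_convexHull]
  rintro _ ⟨z, -, rfl⟩
  exact isLatticePt_toPt z

theorem IsVertexSet.nVerts_convexHull {V : Finset (ℤ × ℤ)} (hV : IsVertexSet V) :
    nVerts 2 (convexHull ℝ (toPt '' V)) = V.card := by
  rw [nVerts, hV.extremePoints_convexHull, ncard_image_of_injective _ toPt_injective,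
    ncard_coe_finset]

theorem not_canInsert_of_blocked {V : Set (ℤ × ℤ)} (hV : IsVertexSet V)
    (hblocked : ∀ x ∉ V, Blocked V x) {x : Pt 2} (hx : IsLatticePt 2 x)
    (hxV : x ∉ (convexHull ℝ (toPt '' V)).extremePoints ℝ) :
    ¬ CanInsert 2 (convexHull ℝ (toPt '' V)) x := by
  obtain ⟨z, rfl⟩ := exists_toPt_eq hx
  rw [hV.extremePoints_convexHull] at hxV
  have hzV : z ∉ V := fun hz => hxV (mem_image_of_mem _ hz)
  rw [CanInsert, convexHull_convexHull_union_left, hV.extremePoints_convexHull, union_singleton,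
    ← image_insert_eq]
  exact (hblocked z hzV).extremePoints_ne hzV

theorem not_connectedIn_of_forall_blocked {V : Finset (ℤ × ℤ)} (hV : IsVertexSet V)
    {p q r : ℤ × ℤ} (hp : p ∈ V) (hq : q ∈ V) (hr : r ∈ V) (hpqr : cross (q - p) (r - p) ≠ 0)
    (hblocked : ∀ x ∉ V, Blocked V x) :
    ¬ ConnectedIn 2 {P ∈ Lambda 2 | nVerts 2 P = V.card ∨ nVerts 2 P = V.card + 1} := by
  set c : ℤ × ℤ := (1, 0)
  set W := V.image (· + c)
  have hW : IsVertexSet W := by rw [Finset.coe_image]; exact hV.image_add c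
  have hPΛ := hV.convexHull_mem_lambda hp hq hr hpqr
  have hQΛ := hW.convexHull_mem_lambda (Finset.mem_image_of_mem _ hp)
    (Finset.mem_image_of_mem _ hq) (Finset.mem_image_of_mem _ hr) (by simpa using hpqr)
  have hQn := hW.nVerts_convexHull
  rw [Finset.card_image_of_injective _ (add_left_injective c)] at hQn
  refine not_connectedIn_of_isolated ⟨hPΛ, Or.inl hV.nVerts_convexHull⟩ ⟨hQΛ, Or.inl hQn⟩
    (fun hQP => ?_) fun R ⟨hRΛ, hRn⟩ hPR => hPR.eq_of_forall_not_canInsert hPΛ.1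
      hV.nVerts_convexHull (fun x hx hxV => not_canInsert_of_blocked hV hblocked hx hxV)
      hRΛ.1 hRΛ.2.2 hRn
  have hWV : W = V := by
    have := congrArg (fun P : Set (Pt 2) => P.extremePoints ℝ) hQP
    simp only [hV.extremePoints_convexHull, hW.extremePoints_convexHull,
      toPt_injective.image_injective.eq_iff, Finset.coe_inj] at this
    exact this
  exact absurd (eq_zero_of_image_add_eq ⟨p, hp⟩ hWV) (by simp [c])

/-- `tri c = c (c - 1) / 2`, so that `(c + 1, tri (c + 1)) - (c, tri c) = (1, c)`. -/
def tri (c : ℤ) : ℤ := c * (c - 1) / 2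

theorem two_mul_tri (c : ℤ) : 2 * tri c = c * (c - 1) := by
  rw [tri, Int.mul_ediv_cancel' (Int.even_mul_pred_self c).two_dvd]

theorem tri_zero : tri 0 = 0 := rfl
theorem tri_one : tri 1 = 0 := rfl
theorem tri_two : tri 2 = 1 := rfl

noncomputable def chains (t k : ℤ) : Finset (ℤ × ℤ) :=
  (Finset.Icc 0 k).image (fun c => (c, tri c)) ∪
    (Finset.Ioo 0 k).image (fun c => (c, t * c - tri c))

theorem mem_chains {t k a b : ℤ} : (a, b) ∈ chains t k ↔
    (0 ≤ a ∧ a ≤ k ∧ b = tri a) ∨ (0 < a ∧ a < k ∧ b = t * a - tri a) := by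
  simp only [chains, Finset.mem_union, Finset.mem_image, Finset.mem_Icc, Finset.mem_Ioo,
    Prod.mk.injEq]
  constructor
  · rintro (⟨c, hc, rfl, rfl⟩ | ⟨c, hc, rfl, rfl⟩)
    exacts [Or.inl ⟨hc.1, hc.2, rfl⟩, Or.inr ⟨hc.1, hc.2, rfl⟩]
  · rintro (⟨h₀, h₁, rfl⟩ | ⟨h₀, h₁, rfl⟩)
    exacts [Or.inl ⟨a, ⟨h₀, h₁⟩, rfl, rfl⟩, Or.inr ⟨a, ⟨h₀, h₁⟩, rfl, rfl⟩]

theorem lower_mem_chains {t k c : ℤ} (h₀ : 0 ≤ c) (h₁ : c ≤ k) : (c, tri c) ∈ chains t k :=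
  mem_chains.2 (Or.inl ⟨h₀, h₁, rfl⟩)

theorem upper_mem_chains {t k c : ℤ} (h₀ : 0 < c) (h₁ : c < k) :
    (c, t * c - tri c) ∈ chains t k :=
  mem_chains.2 (Or.inr ⟨h₀, h₁, rfl⟩)

theorem card_chains {t k : ℤ} (hk : 1 ≤ k) (ht : k - 1 ≤ t) :
    ((chains t k).card : ℤ) = 2 * k := by
  have hinj : ∀ f : ℤ → ℤ, Function.Injective fun c => (c, f c) :=
    fun f c d h => congrArg Prod.fst h
  have hdisj : Disjoint ((Finset.Icc 0 k).image fun c => (c, tri c))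
      ((Finset.Ioo 0 k).image fun c => (c, t * c - tri c)) := by
    simp only [Finset.disjoint_left, Finset.mem_image, Finset.mem_Icc, Finset.mem_Ioo]
    rintro _ ⟨c, -, rfl⟩ ⟨d, hd, hdc⟩
    simp only [Prod.mk.injEq] at hdc
    obtain ⟨rfl, hcd⟩ := hdc
    nlinarith [two_mul_tri d]
  rw [chains, Finset.card_union_of_disjoint hdisj, Finset.card_image_of_injective _ (hinj _),
    Finset.card_image_of_injective _ (hinj _), Int.card_Icc, Int.card_Ioo]
  omega

-- `(1 - 2c, 2)` is normal to the chord from `(c - 1, tri (c - 1))` to `(c + 1, tri (c + 1))`.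
theorem lt_of_tri_le {c : ℤ} {w : ℤ × ℤ} (hw : tri w.1 ≤ w.2) (hwc : w ≠ (c, tri c)) :
    (1 - 2 * c) * c + 2 * tri c < (1 - 2 * c) * w.1 + 2 * w.2 := by
  have h₁ := two_mul_tri c
  have h₂ := two_mul_tri w.1
  rcases eq_or_ne w.1 c with hc | hc
  · have : tri c < w.2 := lt_of_le_of_ne (hc ▸ hw) fun h => hwc (Prod.ext hc h.symm)
    rw [hc]
    linarith
  · nlinarith [sq_pos_of_ne_zero (sub_ne_zero.2 hc)]

theorem lt_of_le_sub_tri {t c : ℤ} {w : ℤ × ℤ} (hw : w.2 ≤ t * w.1 - tri w.1)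
    (hwc : w ≠ (c, t * c - tri c)) :
    (2 * t - 2 * c + 1) * c - 2 * (t * c - tri c) < (2 * t - 2 * c + 1) * w.1 - 2 * w.2 := by
  have h₁ := two_mul_tri c
  have h₂ := two_mul_tri w.1
  rcases eq_or_ne w.1 c with hc | hc
  · have : w.2 < t * c - tri c := lt_of_le_of_ne (hc ▸ hw) fun h => hwc (Prod.ext hc h)
    rw [hc]
    linarith
  · nlinarith [sq_pos_of_ne_zero (sub_ne_zero.2 hc)]

theorem bounds_of_mem_chains {t k : ℤ} (ht : k - 1 ≤ t) {w : ℤ × ℤ} (hw : w ∈ chains t k) :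
    tri w.1 ≤ w.2 ∧ w.2 ≤ t * w.1 - tri w.1 := by
  obtain ⟨a, b⟩ := w
  have := two_mul_tri a
  rcases mem_chains.1 hw with ⟨h₀, h₁, rfl⟩ | ⟨h₀, h₁, rfl⟩ <;> constructor <;> nlinarith

/-- A lattice `2k`-gon, symmetric about the midpoint of `(0, 0)` and `(k, tri k)`, with edge
vectors `±(1, 0), …, ±(1, k - 1)`. -/
noncomputable def evenPolygon (k : ℤ) : Finset (ℤ × ℤ) := chains (k - 1) k

/-- A lattice `(2k + 1)`-gon: the lower chain of `evenPolygon k`, the edge from `(k, tri k)` to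
`(k, tri k + 1)`, and then edge vectors `(-1, k - 2), (-1, -2), (-1, -3), …, (-1, -k)`. -/
noncomputable def oddPolygon (k : ℤ) : Finset (ℤ × ℤ) := insert (k, tri k + 1) (chains k k)

theorem isVertexSet_evenPolygon {k : ℤ} : IsVertexSet (evenPolygon k) := by
  rintro ⟨a, b⟩ hv
  rcases mem_chains.1 hv with ⟨-, -, rfl⟩ | ⟨-, -, rfl⟩
  · exact ⟨1 - 2 * a, 2, fun w hw hwv => lt_of_tri_le (bounds_of_mem_chains le_rfl hw).1 hwv⟩
  · refine ⟨2 * (k - 1) - 2 * a + 1, -2, fun w hw hwv => ?_⟩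
    have := lt_of_le_sub_tri (bounds_of_mem_chains le_rfl hw).2 hwv
    linarith

theorem isVertexSet_oddPolygon {k : ℤ} (hk : 1 ≤ k) : IsVertexSet (oddPolygon k) := by
  have hk₂ := two_mul_tri k
  rw [oddPolygon, Finset.coe_insert]
  have hbounds : ∀ w ∈ (insert (k, tri k + 1) (chains k k) : Set (ℤ × ℤ)),
      tri w.1 ≤ w.2 ∧ w.2 ≤ k * w.1 - tri w.1 := by
    rintro w (rfl | hw)
    · constructor <;> nlinarith
    · exact bounds_of_mem_chains (by omega) hw
  rintro ⟨a, b⟩ (hv | hv)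
  · refine ⟨-(k - 1), -1, ?_⟩
    rintro ⟨c, d⟩ (hw | hw) hwv
    · exact absurd (hw.trans hv.symm) hwv
    rw [hv]
    have := two_mul_tri c
    rcases mem_chains.1 hw with ⟨h₀, h₁, rfl⟩ | ⟨h₀, h₁, rfl⟩ <;> nlinarith
  rcases mem_chains.1 hv with ⟨-, -, rfl⟩ | ⟨-, -, rfl⟩
  · exact ⟨1 - 2 * a, 2, fun w hw hwv => lt_of_tri_le (hbounds w hw).1 hwv⟩
  · refine ⟨2 * k - 2 * a + 1, -2, fun w hw hwv => ?_⟩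
    have := lt_of_le_sub_tri (hbounds w hw).2 hwv
    linarith

theorem blocked_chains_of_fst_lt {t k : ℤ} (hk : 2 ≤ k) (ht : k - 1 ≤ t) (htk : 3 ≤ k ∨ t = 1)
    {x : ℤ × ℤ} (hx : x.1 < k) : Blocked (chains t k) x := by
  obtain ⟨a, b⟩ := x
  rcases le_or_gt a 0 with ha | ha
  · refine blocked_of_fst_nonpos (t := t) (by omega)
      (mem_chains.2 (Or.inl ⟨le_rfl, by omega, rfl⟩))
      (mem_chains.2 (Or.inl ⟨zero_le_one, by omega, rfl⟩))
      (mem_chains.2 (Or.inl ⟨zero_le_two, hk, rfl⟩))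
      (mem_chains.2 (Or.inr ⟨one_pos, by omega, by simp [tri_one]⟩)) ?_ ha
    rcases htk with htk | rfl
    · exact mem_chains.2 (Or.inr ⟨two_pos, htk, by rw [tri_two]; ring⟩)
    · exact mem_chains.2 (Or.inl ⟨zero_le_two, hk, rfl⟩)
  · have := two_mul_tri (a - 1)
    have := two_mul_tri a
    have := two_mul_tri (a + 1)
    exact blocked_of_column (lower_mem_chains (by omega) (by omega))
      (lower_mem_chains (by omega) (by omega)) (lower_mem_chains ha.le (by omega))
      (upper_mem_chains ha hx) (by linarith) (by nlinarith) b

theorem mem_chains_sub_one {k c : ℤ} (h₀ : 0 ≤ c) (h₁ : c ≤ k) :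
    (c, (k - 1) * c - tri c) ∈ chains (k - 1) k := by
  have := two_mul_tri c
  rw [mem_chains]
  rcases h₀.eq_or_lt with rfl | h₀
  · exact Or.inl ⟨le_rfl, h₁, by rw [tri_zero]; ring⟩
  rcases h₁.eq_or_lt with rfl | h₁
  · exact Or.inl ⟨h₀.le, le_rfl, by linarith⟩
  · exact Or.inr ⟨h₀, h₁, rfl⟩

theorem blocked_evenPolygon {k : ℤ} (hk : 2 ≤ k) (x : ℤ × ℤ) : Blocked (evenPolygon k) x := by
  rcases lt_or_ge x.1 k with hx | hx
  · exact blocked_chains_of_fst_lt hk le_rfl (by omega) hx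
  have := two_mul_tri k
  have := two_mul_tri (k - 1)
  have := two_mul_tri (k - 2)
  -- the point reflection `z ↦ (k, tri k) - z` maps the polygon to itself, exchanging its ends
  apply Blocked.of_image_sub (k, tri k)
  have hsub : ∀ a b c d : ℤ, (a, b) ∈ chains (k - 1) k → k - a = c → tri k - b = d →
      (c, d) ∈ (fun z => (k, tri k) - z) '' (chains (k - 1) k : Set (ℤ × ℤ)) :=
    fun a b c d h hc hd => ⟨(a, b), h, by rw [← hc, ← hd]; rfl⟩
  refine blocked_of_fst_nonpos (t := k - 1) (by omega)
    (hsub _ _ _ _ (lower_mem_chains (by omega) le_rfl) (by ring) (by ring))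
    (hsub _ _ _ _ (mem_chains_sub_one (c := k - 1) (by omega) (by omega)) (by ring) (by linarith))
    (hsub _ _ _ _ (mem_chains_sub_one (c := k - 2) (by omega) (by omega)) (by ring) (by linarith))
    (hsub _ _ _ _ (lower_mem_chains (c := k - 1) (by omega) (by omega)) (by ring) (by linarith))
    (hsub _ _ _ _ (lower_mem_chains (c := k - 2) (by omega) (by omega)) (by ring) (by linarith))
    (by simpa using hx)

theorem blocked_oddPolygon {k : ℤ} (hk : 3 ≤ k) (x : ℤ × ℤ) : Blocked (oddPolygon k) x := by
  rw [oddPolygon, Finset.coe_insert]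
  rcases lt_or_ge x.1 k with hx | hx
  · exact (blocked_chains_of_fst_lt (by omega) (by omega) (Or.inl hk) hx).mono
      (subset_insert _ _)
  have := two_mul_tri k
  have := two_mul_tri (k - 1)
  exact blocked_of_vertical_edge (p := k) (q := tri k) (s := k - 1) (t := 2 - k)
    (mem_insert_of_mem _ (lower_mem_chains (by omega) le_rfl)) (mem_insert _ _)
    (mem_insert_of_mem _ (mem_chains.2 (Or.inl ⟨by omega, by omega, by linarith⟩)))
    (mem_insert_of_mem _ (mem_chains.2 (Or.inr ⟨by omega, by omega, by linarith⟩))) (by omega) hx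

theorem not_connectedIn_even {k : ℕ} (hk : 2 ≤ k) :
    ¬ ConnectedIn 2 {P ∈ Lambda 2 | nVerts 2 P = 2 * k ∨ nVerts 2 P = 2 * k + 1} := by
  have hcard : (evenPolygon k).card = 2 * k := by
    have := card_chains (t := k - 1) (k := k) (by omega) le_rfl
    rw [evenPolygon]
    omega
  rw [← hcard]
  exact not_connectedIn_of_forall_blocked isVertexSet_evenPolygon (p := (0, 0)) (q := (1, 0))
    (r := (1, k - 1)) (mem_chains.2 (Or.inl ⟨le_rfl, by omega, rfl⟩))
    (mem_chains.2 (Or.inl ⟨zero_le_one, by omega, rfl⟩))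
    (mem_chains.2 (Or.inr ⟨one_pos, by omega, by simp [tri_one]⟩))
    (by simp only [cross, Prod.mk_sub_mk]; omega) fun x _ => blocked_evenPolygon (by omega) x

theorem not_connectedIn_odd {k : ℕ} (hk : 3 ≤ k) :
    ¬ ConnectedIn 2 {P ∈ Lambda 2 | nVerts 2 P = 2 * k + 1 ∨ nVerts 2 P = 2 * k + 1 + 1} := by
  have hcard : (oddPolygon k).card = 2 * k + 1 := by
    have := card_chains (t := k) (k := k) (by omega) (by omega)
    rw [oddPolygon, Finset.card_insert_of_notMem fun h => (mem_chains.1 h).elim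
      (fun h => by omega) (fun h => by omega)]
    omega
  rw [← hcard]
  exact not_connectedIn_of_forall_blocked (isVertexSet_oddPolygon (by omega)) (p := (0, 0))
    (q := (1, 0)) (r := (1, k))
    (Finset.mem_insert_of_mem (mem_chains.2 (Or.inl ⟨le_rfl, by omega, rfl⟩)))
    (Finset.mem_insert_of_mem (mem_chains.2 (Or.inl ⟨zero_le_one, by omega, rfl⟩)))
    (Finset.mem_insert_of_mem (mem_chains.2 (Or.inr ⟨one_pos, by omega, by simp [tri_one]⟩)))
    (by simp only [cross, Prod.mk_sub_mk]; omega) fun x _ => blocked_oddPolygon (by omega) x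

end LatticePolygon

/-- for `n = 4` or `n ≥ 6`, the subgraph induced in `Λ(2)` by the
lattice polygons with `n` or `n + 1` vertices is disconnected. -/
theorem stmt_14 (n : ℕ) (hn : n = 4 ∨ 6 ≤ n) :
    ¬ ConnectedIn 2 {P ∈ Lambda 2 | nVerts 2 P = n ∨ nVerts 2 P = n + 1} := by
  obtain ⟨k, rfl | rfl⟩ := Nat.even_or_odd' n
  · exact LatticePolygon.not_connectedIn_even (by omega)
  · exact LatticePolygon.not_connectedIn_odd (by omega)
end
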